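/- arXiv:1902.07824 — 7 statements merged into one kernel-verified Lean document; each statement's English description precedes it below -/
import Mathlib

section
/- Let B be a fractional Brownian motion with Hurst index H ∈ (0,1) on [0,1]. Fix δ ∈ (0,H) and constants ν, ν* > 0, set ρ = 2(ν + ν*), ℓ_k = 2^{-(H-δ)k}, and K(ν) = sup{n ≥ 1 : 4√n > ν·2^{δn}} (a finite natural number). Then for every integer k > K(ν), P( max_{0 ≤ j ≤ 2^{k-1}-1} |a^k_j − b^k_j| ≥ ρ·ℓ_k ) ≤ 2·exp(−(ν*)²·2^{2kδ−2}). -/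
open MeasureTheory ProbabilityTheory Filter

noncomputable section

/-- Covariance function of fractional Brownian motion with Hurst index `H`:
`r(s,t) = (s^{2H} + t^{2H} − |s−t|^{2H})/2`. -/
def fbmCov (H s t : ℝ) : ℝ := (s ^ (2 * H) + t ^ (2 * H) - |s - t| ^ (2 * H)) / 2

/-- `B` is a fractional Brownian motion with Hurst index `H` on `[0,1]` under `P`:
continuous sample paths, `B 0 = 0`, and all finite-dimensional marginals are centered
Gaussian with covariance `fbmCov H` (expressed via one-dimensional laws of all linear
combinations). -/
structure IsFBM {Ω : Type*} [MeasurableSpace Ω] (P : Measure Ω) (H : ℝ)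
    (B : Ω → ℝ → ℝ) : Prop where
  continuousOn : ∀ ω, ContinuousOn (B ω) (Set.Icc 0 1)
  init : ∀ ω, B ω 0 = 0
  measurable : ∀ t : ℝ, Measurable fun ω => B ω t
  gaussian : ∀ (m : ℕ) (t : Fin m → ℝ), (∀ i, t i ∈ Set.Icc (0:ℝ) 1) →
    ∀ c : Fin m → ℝ,
      Measure.map (fun ω => ∑ i, c i * B ω (t i)) P =
        gaussianReal 0 (∑ i, ∑ j, c i * c j * fbmCov H (t i) (t j)).toNNReal

/-- `max_{0 ≤ j ≤ 2^{k-1}-1} |a^k_j − b^k_j|` where `a^k_j = B((2j+1)·2^{−k})` and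
`b^k_j = (B(j·2^{−(k−1)}) + B((j+1)·2^{−(k−1)}))/2`. -/
def mdGap (B : ℝ → ℝ) (k : ℕ) : ℝ :=
  (Finset.range (2 ^ (k - 1))).sup' (Finset.nonempty_range_iff.mpr (by positivity))
    fun j => |B ((2 * (j:ℝ) + 1) / 2 ^ k) -
      (B ((j:ℝ) / 2 ^ (k - 1)) + B (((j:ℝ) + 1) / 2 ^ (k - 1))) / 2|

/-- `K(ν) = sup {n ≥ 1 : 4√n > ν·2^{δn}}`. -/
def KofNu (ν δ : ℝ) : ℕ :=
  sSup {n : ℕ | 1 ≤ n ∧ ν * (2:ℝ) ^ (δ * (n:ℝ)) < 4 * Real.sqrt n}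

/-!
Write `h = 2^{-k}` and `u = (2j+1)h`. The displacement
`a^k_j - b^k_j = B(u) - (B(u-h) + B(u+h))/2` has zero-sum weights, so its variance only sees
the increments of `B` and equals `h^{2H} - (2h)^{2H}/4 ≤ 2^{-2Hk}`. Being centred Gaussian it is
sub-Gaussian with that parameter, and the Chernoff bound gives
`P(|a^k_j - b^k_j| ≥ x) ≤ 2 exp(-x²/(2·2^{-2Hk}))`. A union bound over the `2^{k-1} ≤ e^k`
indices leaves `2 exp(k - 2(ν+ν*)² 2^{2δk})` for `x = ρ 2^{-(H-δ)k}`, and `k > K(ν)` means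
`16 k ≤ ν² 2^{2δk}`, which the exponent absorbs with room `ν*² 2^{2δk}/4` to spare.
-/

open Real
open scoped NNReal

namespace ProbabilityTheory

variable {Ω : Type*} [MeasurableSpace Ω] {μ : Measure Ω} {X : Ω → ℝ}

lemma hasSubgaussianMGF_id_gaussianReal {v c : ℝ≥0} (hvc : v ≤ c) :
    HasSubgaussianMGF id c (gaussianReal 0 v) where
  integrable_exp_mul := integrable_exp_mul_gaussianReal
  mgf_le t := by
    simp only [mgf_id_gaussianReal, zero_mul, zero_add]
    gcongr

lemma HasSubgaussianMGF.of_map_eq_gaussianReal {v c : ℝ≥0} (hX : AEMeasurable X μ)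
    (hmap : μ.map X = gaussianReal 0 v) (hvc : v ≤ c) : HasSubgaussianMGF X c μ :=
  (HasSubgaussianMGF.id_map_iff hX).1 (hmap ▸ hasSubgaussianMGF_id_gaussianReal hvc)

lemma HasSubgaussianMGF.measureReal_le_abs_le [IsFiniteMeasure μ] {c : ℝ≥0}
    (h : HasSubgaussianMGF X c μ) {ε : ℝ} (hε : 0 ≤ ε) :
    μ.real {ω | ε ≤ |X ω|} ≤ 2 * exp (-ε ^ 2 / (2 * c)) :=
  calc μ.real {ω | ε ≤ |X ω|} = μ.real ({ω | ε ≤ X ω} ∪ {ω | ε ≤ (-X) ω}) := by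
        congr 1; ext; exact le_abs (a := ε)
    _ ≤ exp (-ε ^ 2 / (2 * c)) + exp (-ε ^ 2 / (2 * c)) :=
        (measureReal_union_le _ _).trans
          (add_le_add (h.measure_ge_le hε) (h.neg.measure_ge_le hε))
    _ = 2 * exp (-ε ^ 2 / (2 * c)) := by ring

end ProbabilityTheory

lemma sum_mul_fbmCov_of_sum_eq_zero {ι : Type*} [Fintype ι] (H : ℝ) (c t : ι → ℝ)
    (hc : ∑ i, c i = 0) :
    ∑ i, ∑ j, c i * c j * fbmCov H (t i) (t j) =
      -(∑ i, ∑ j, c i * c j * |t i - t j| ^ (2 * H)) / 2 := by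
  have hexpand : ∀ i j, c i * c j * fbmCov H (t i) (t j) =
      c i * t i ^ (2 * H) / 2 * c j + c i * (c j * t j ^ (2 * H) / 2)
        - c i * c j * |t i - t j| ^ (2 * H) / 2 := by
    intro i j
    unfold fbmCov
    ring
  simp only [hexpand, Finset.sum_sub_distrib, Finset.sum_add_distrib, ← Finset.mul_sum,
    ← Finset.sum_mul, hc, ← Finset.sum_div]
  ring

def midpointDisplacement (f : ℝ → ℝ) (u h : ℝ) : ℝ := f u - (f (u - h) + f (u + h)) / 2

lemma sum_mul_fbmCov_midpoint {H : ℝ} (hH : 0 < H) (u : ℝ) {h : ℝ} (hh : 0 ≤ h) :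
    ∑ i, ∑ j, ![1, -(1/2), -(1/2)] i * ![1, -(1/2), -(1/2)] j *
        fbmCov H (![u, u - h, u + h] i) (![u, u - h, u + h] j) =
      h ^ (2 * H) - (2 * h) ^ (2 * H) / 4 := by
  have hc : ∑ i, ![(1:ℝ), -(1/2), -(1/2)] i = 0 := by
    norm_num [Fin.sum_univ_three, Matrix.cons_val_two, Matrix.tail_cons, Matrix.head_cons]
  rw [sum_mul_fbmCov_of_sum_eq_zero _ _ _ hc]
  simp only [Fin.sum_univ_three, Matrix.cons_val_zero, Matrix.cons_val_one, Matrix.cons_val_two,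
    Matrix.head_cons, Matrix.tail_cons, sub_self, abs_zero, zero_rpow (by positivity : 2 * H ≠ 0)]
  rw [show u - (u - h) = h by ring, show u - (u + h) = -h by ring, show u - h - u = -h by ring,
    show u - h - (u + h) = -(2 * h) by ring, show u + h - u = h by ring,
    show u + h - (u - h) = 2 * h by ring, abs_neg, abs_neg, abs_of_nonneg hh,
    abs_of_nonneg (by positivity : 0 ≤ 2 * h)]
  ring

lemma dyadic_midpoint_sub_inv {k : ℕ} (hk : 1 ≤ k) (j : ℝ) :
    (2 * j + 1) / 2 ^ k - (2 ^ k)⁻¹ = j / 2 ^ (k - 1) := by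
  obtain ⟨m, rfl⟩ := Nat.exists_eq_add_of_le' hk
  rw [Nat.add_sub_cancel, pow_succ]
  field_simp
  ring

lemma dyadic_midpoint_add_inv {k : ℕ} (hk : 1 ≤ k) (j : ℝ) :
    (2 * j + 1) / 2 ^ k + (2 ^ k)⁻¹ = (j + 1) / 2 ^ (k - 1) := by
  obtain ⟨m, rfl⟩ := Nat.exists_eq_add_of_le' hk
  rw [Nat.add_sub_cancel, pow_succ]
  field_simp
  ring

lemma le_mdGap_iff {f : ℝ → ℝ} {k : ℕ} (hk : 1 ≤ k) {x : ℝ} :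
    x ≤ mdGap f k ↔ ∃ j : ℕ, j < 2 ^ (k - 1) ∧
      x ≤ |midpointDisplacement f ((2 * j + 1) / 2 ^ k) (2 ^ k)⁻¹| := by
  simp only [mdGap, Finset.le_sup'_iff, Finset.mem_range, midpointDisplacement,
    dyadic_midpoint_sub_inv hk, dyadic_midpoint_add_inv hk]

namespace IsFBM

variable {Ω : Type*} [MeasurableSpace Ω] {P : Measure Ω} {H : ℝ} {B : Ω → ℝ → ℝ}

lemma map_midpointDisplacement (hB : IsFBM P H B) (hH : 0 < H) {u h : ℝ} (hh : 0 ≤ h)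
    (hu₀ : 0 ≤ u - h) (hu₁ : u + h ≤ 1) :
    P.map (fun ω => midpointDisplacement (B ω) u h) =
      gaussianReal 0 (h ^ (2 * H) - (2 * h) ^ (2 * H) / 4).toNNReal := by
  have hpts : ∀ i, ![u, u - h, u + h] i ∈ Set.Icc (0:ℝ) 1 := by
    intro i
    fin_cases i <;> simp only [Fin.reduceFinMk, Matrix.cons_val, Set.mem_Icc] <;>
      constructor <;> linarith
  convert hB.gaussian 3 _ hpts ![1, -(1/2), -(1/2)] using 2
  · ext ω
    simp only [midpointDisplacement, Fin.sum_univ_three, Matrix.cons_val]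
    ring
  · rw [sum_mul_fbmCov_midpoint hH u hh]

lemma hasSubgaussianMGF_midpointDisplacement (hB : IsFBM P H B) (hH : 0 < H) {u h : ℝ}
    (hh : 0 ≤ h) (hu₀ : 0 ≤ u - h) (hu₁ : u + h ≤ 1) :
    HasSubgaussianMGF (fun ω => midpointDisplacement (B ω) u h) (h ^ (2 * H)).toNNReal P := by
  refine .of_map_eq_gaussianReal ?_ (hB.map_midpointDisplacement hH hh hu₀ hu₁) ?_
  · exact ((hB.measurable u).sub
      (((hB.measurable _).add (hB.measurable _)).div_const 2)).aemeasurable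
  · gcongr
    linarith [rpow_nonneg (by positivity : 0 ≤ 2 * h) (2 * H)]

lemma measureReal_le_mdGap_le [IsProbabilityMeasure P] (hB : IsFBM P H B) (hH : 0 < H)
    {k : ℕ} (hk : 1 ≤ k) {x : ℝ} (hx : 0 ≤ x) :
    P.real {ω | x ≤ mdGap (B ω) k} ≤
      2 ^ (k - 1) * (2 * exp (-x ^ 2 / (2 * ((2:ℝ) ^ k)⁻¹ ^ (2 * H)))) := by
  set h : ℝ := ((2:ℝ) ^ k)⁻¹
  set u : ℕ → ℝ := fun j => (2 * j + 1) / 2 ^ k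
  have hunion : {ω | x ≤ mdGap (B ω) k} =
      ⋃ j ∈ Finset.range (2 ^ (k - 1)), {ω | x ≤ |midpointDisplacement (B ω) (u j) h|} := by
    ext ω
    simp [le_mdGap_iff hk, u, h]
  have htail : ∀ j ∈ Finset.range (2 ^ (k - 1)),
      P.real {ω | x ≤ |midpointDisplacement (B ω) (u j) h|} ≤
        2 * exp (-x ^ 2 / (2 * h ^ (2 * H))) := by
    intro j hj
    have hj : (j + 1 : ℝ) ≤ 2 ^ (k - 1) := by exact_mod_cast Finset.mem_range.1 hj
    have hsub : 0 ≤ u j - h := by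
      rw [dyadic_midpoint_sub_inv hk]; positivity
    have hadd : u j + h ≤ 1 := by
      rw [dyadic_midpoint_add_inv hk, div_le_one (by positivity)]; exact hj
    have hsg := hB.hasSubgaussianMGF_midpointDisplacement hH (by positivity) hsub hadd
    simpa only [Real.coe_toNNReal _ (by positivity : 0 ≤ h ^ (2 * H))]
      using hsg.measureReal_le_abs_le hx
  calc P.real {ω | x ≤ mdGap (B ω) k}
      ≤ ∑ j ∈ Finset.range (2 ^ (k - 1)),
          P.real {ω | x ≤ |midpointDisplacement (B ω) (u j) h|} :=
        hunion ▸ measureReal_biUnion_finset_le _ _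
    _ ≤ ∑ j ∈ Finset.range (2 ^ (k - 1)), 2 * exp (-x ^ 2 / (2 * h ^ (2 * H))) :=
        Finset.sum_le_sum htail
    _ = _ := by simp

end IsFBM

lemma eventually_four_mul_sqrt_le {ν δ : ℝ} (hν : 0 < ν) (hδ : 0 < δ) :
    ∀ᶠ n : ℕ in atTop, 4 * √n ≤ ν * (2:ℝ) ^ (δ * n) := by
  have hlim := (tendsto_rpow_mul_exp_neg_mul_atTop_nhds_zero (1 / 2) (log 2 * δ)
    (by positivity)).comp tendsto_natCast_atTop_atTop
  filter_upwards [hlim.eventually (gt_mem_nhds (by positivity : (0:ℝ) < ν / 4))] with n hn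
  simp only [Function.comp_apply] at hn
  rw [← sqrt_eq_rpow, neg_mul, exp_neg, ← div_eq_mul_inv, div_lt_iff₀ (exp_pos _)] at hn
  rw [rpow_def_of_pos two_pos, ← mul_assoc]
  linarith

lemma four_mul_sqrt_le_of_KofNu_lt {ν δ : ℝ} (hν : 0 < ν) (hδ : 0 < δ) {k : ℕ}
    (hk : KofNu ν δ < k) : 4 * √k ≤ ν * (2:ℝ) ^ (δ * k) := by
  obtain ⟨N, hN⟩ := eventually_atTop.1 (eventually_four_mul_sqrt_le hν hδ)
  have hbdd : BddAbove {n : ℕ | 1 ≤ n ∧ ν * (2:ℝ) ^ (δ * n) < 4 * √n} :=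
    ⟨N, fun n hn => le_of_not_ge fun hNn => (hN n hNn).not_gt hn.2⟩
  by_contra! hlt
  exact (le_csSup hbdd ⟨by omega, hlt⟩).not_gt hk

lemma two_pow_mul_exp_neg_le {n : ℕ} {a b : ℝ} (h : n + b ≤ a) :
    (2:ℝ) ^ n * exp (-a) ≤ exp (-b) :=
  calc (2:ℝ) ^ n * exp (-a) ≤ exp 1 ^ n * exp (-a) := by
        gcongr; linarith [add_one_le_exp 1]
    _ = exp (n - a) := by rw [← exp_nat_mul, mul_one, ← exp_add, sub_eq_add_neg]
    _ ≤ exp (-b) := exp_le_exp.2 (by linarith)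

lemma two_rpow_sq (y : ℝ) : ((2:ℝ) ^ y) ^ 2 = 2 ^ (2 * y) := by
  rw [← rpow_natCast, ← rpow_mul zero_le_two, Nat.cast_two, mul_comm]

lemma inv_two_pow_rpow (k : ℕ) (y : ℝ) : ((2:ℝ) ^ k)⁻¹ ^ y = 2 ^ (-(k * y)) := by
  rw [← rpow_natCast, ← rpow_neg zero_le_two, ← rpow_mul zero_le_two, neg_mul]

lemma tail_exponent_eq (H δ ρ : ℝ) (k : ℕ) :
    (ρ * 2 ^ (-(H - δ) * k)) ^ 2 / (2 * ((2:ℝ) ^ k)⁻¹ ^ (2 * H)) =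
      ρ ^ 2 / 2 * 2 ^ (2 * δ * k) := by
  have hsplit : (2:ℝ) ^ (2 * (-(H - δ) * k)) = 2 ^ (2 * δ * k) * 2 ^ (-(k * (2 * H))) := by
    rw [← rpow_add two_pos]; ring_nf
  rw [mul_pow, two_rpow_sq, inv_two_pow_rpow, hsplit]
  field_simp

theorem stmt0_general {Ω : Type*} [MeasurableSpace Ω] (P : Measure Ω) [IsProbabilityMeasure P]
    (H δ ν ν' ρ : ℝ) (hδ : δ ∈ Set.Ioo (0:ℝ) H)
    (hν : 0 < ν) (hν' : 0 < ν') (hρ : ρ = 2 * (ν + ν'))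
    (B : Ω → ℝ → ℝ) (hB : IsFBM P H B) (k : ℕ) (hk : KofNu ν δ < k) :
    P {ω | ρ * (2:ℝ) ^ (-(H - δ) * (k:ℝ)) ≤ mdGap (B ω) k} ≤
      ENNReal.ofReal (2 * Real.exp (-ν' ^ 2 * (2:ℝ) ^ (2 * (k:ℝ) * δ - 2))) := by
  obtain ⟨hδ₀, hδH⟩ := hδ
  have hk₁ : 1 ≤ k := by omega
  have hx : 0 ≤ ρ * (2:ℝ) ^ (-(H - δ) * (k:ℝ)) := by rw [hρ]; positivity
  rw [← ofReal_measureReal]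
  refine ENNReal.ofReal_le_ofReal
    ((hB.measureReal_le_mdGap_le (hδ₀.trans hδH) hk₁ hx).trans ?_)
  have hF : 16 * (k:ℝ) ≤ ν ^ 2 * 2 ^ (2 * δ * k) := by
    have h := pow_le_pow_left₀ (by positivity) (four_mul_sqrt_le_of_KofNu_lt hν hδ₀ hk) 2
    rw [mul_pow, mul_pow, sq_sqrt (Nat.cast_nonneg k), two_rpow_sq, ← mul_assoc] at h
    linarith
  have hquarter : (2:ℝ) ^ (2 * (k:ℝ) * δ - 2) = 2 ^ (2 * δ * k) / 4 := by
    rw [rpow_sub two_pos, rpow_two]; ring_nf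
  rw [neg_div, tail_exponent_eq, mul_left_comm, hquarter, hρ, neg_mul]
  gcongr
  apply two_pow_mul_exp_neg_le
  have hpred : ((k - 1 : ℕ) : ℝ) ≤ k := by exact_mod_cast Nat.sub_le k 1
  nlinarith [mul_pos (mul_pos hν hν') (by positivity : (0:ℝ) < 2 ^ (2 * δ * k))]

/-- Theorem 1 (tail bound for the midpoint displacement): for `k > K(ν)`,
`P(max_j |a^k_j − b^k_j| ≥ ρ·2^{−(H−δ)k}) ≤ 2·exp(−ν*²·2^{2kδ−2})` with `ρ = 2(ν+ν*)`. -/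
theorem stmt0 {Ω : Type*} [MeasurableSpace Ω] (P : Measure Ω) [IsProbabilityMeasure P]
    (H δ ν ν' ρ : ℝ) (hH : H ∈ Set.Ioo (0:ℝ) 1) (hδ : δ ∈ Set.Ioo (0:ℝ) H)
    (hν : 0 < ν) (hν' : 0 < ν') (hρ : ρ = 2 * (ν + ν'))
    (B : Ω → ℝ → ℝ) (hB : IsFBM P H B) (k : ℕ) (hk : KofNu ν δ < k) :
    P {ω | ρ * (2:ℝ) ^ (-(H - δ) * (k:ℝ)) ≤ mdGap (B ω) k} ≤
      ENNReal.ofReal (2 * Real.exp (-ν' ^ 2 * (2:ℝ) ^ (2 * (k:ℝ) * δ - 2))) :=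
  stmt0_general P H δ ν ν' ρ hδ hν hν' hρ B hB k hk
end
end

section
/- Let B be a fractional Brownian motion with Hurst index H ∈ (0,1) on [0,1]. Fix δ ∈ (0,H), constants ν, ν* > 0, and set ρ = 2(ν + ν*). Let N = sup{k ≥ 1 : max_{0 ≤ j ≤ 2^{k-1}-1} |a^k_j − b^k_j| ≥ ρ·2^{−(H−δ)k}} (with N = 0 if the set is empty). Then: (i) for every t > 0, E[exp(tN)] < ∞ (in particular N < ∞ almost surely); and (ii) almost surely, for every integer n > N, ‖B − B_n‖_∞ ≤ ρ·2^{−(H−δ)(n+1)} / (1 − 2^{−(H−δ)}). -/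
/-!
The midpoint displacement `a^k_j − b^k_j` is a centred Gaussian of variance at most `2^{-2Hk}`,
so a Chernoff bound and a union bound over the `2^{k-1}` midpoints show that level `k` breaks the
record with probability at most `2^k exp(-(ρ²/2) 2^{2δk})`. This decays doubly exponentially, so
`∑ e^{tk} P(level k breaks the record)` converges, which bounds `E[e^{tN}]`, and by Borel–Cantelli
almost surely only finitely many levels break the record. Deterministically, refining the grid
from `D_K` to `D_{K+1}` moves the interpolant by at most `max_j |a^{K+1}_j − b^{K+1}_j|`, so for
`n > N` the error `‖B − B_n‖_∞` is bounded by the geometric tail `∑_{k>n} ρ 2^{-(H-δ)k}`.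
-/

open MeasureTheory ProbabilityTheory Filter

noncomputable section

/-- The level of the last record-breaker:
`N = sup {k ≥ 1 : max_j |a^k_j − b^k_j| ≥ ρ·2^{−(H−δ)k}}` (`0` if the set is empty). -/
def lastRB (H δ ρ : ℝ) (B : ℝ → ℝ) : ℕ :=
  sSup {k : ℕ | 1 ≤ k ∧ ρ * (2:ℝ) ^ (-(H - δ) * (k:ℝ)) ≤ mdGap B k}

/-- Piecewise linear interpolation of `f` on the dyadic grid `D_n`. -/
def dyadicInterp (n : ℕ) (f : ℝ → ℝ) (t : ℝ) : ℝ :=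
  f ((⌊t * 2 ^ n⌋ : ℝ) / 2 ^ n) +
    (t * 2 ^ n - (⌊t * 2 ^ n⌋ : ℝ)) *
      (f (((⌊t * 2 ^ n⌋ : ℝ) + 1) / 2 ^ n) - f ((⌊t * 2 ^ n⌋ : ℝ) / 2 ^ n))

/-- Supremum norm of `u` over `[0,1]`. -/
def supNorm01 (u : ℝ → ℝ) : ℝ := ⨆ t : Set.Icc (0:ℝ) 1, |u (t : ℝ)|

open Real Topology
open scoped NNReal ENNReal

lemma dyadicInterp_eq_of_mul_pow_eq (n : ℕ) (f : ℝ → ℝ) {t θ : ℝ} (j : ℕ)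
    (hθ₀ : 0 ≤ θ) (hθ₁ : θ < 1) (ht : t * 2 ^ n = j + θ) :
    dyadicInterp n f t = f (j / 2 ^ n) + θ * (f ((j + 1) / 2 ^ n) - f (j / 2 ^ n)) := by
  have hfloor : ⌊t * 2 ^ n⌋ = j := by
    rw [ht, Int.floor_eq_iff]; push_cast; constructor <;> linarith
  rw [dyadicInterp, hfloor, Int.cast_natCast, ht]
  ring

lemma dyadicInterp_one (n : ℕ) (f : ℝ → ℝ) : dyadicInterp n f 1 = f 1 := by
  rw [dyadicInterp_eq_of_mul_pow_eq n f (2 ^ n) le_rfl one_pos (by push_cast; ring)]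
  push_cast
  rw [div_self (by positivity)]
  ring

lemma mdGap_nonneg (f : ℝ → ℝ) (k : ℕ) : 0 ≤ mdGap f k :=
  Finset.le_sup'_of_le _ (Finset.mem_range.2 (by positivity : 0 < 2 ^ (k - 1))) (abs_nonneg _)

lemma abs_midpoint_sub_le_mdGap (f : ℝ → ℝ) {K j : ℕ} (hj : j < 2 ^ K) :
    |f ((2 * j + 1) / 2 ^ (K + 1)) - (f (j / 2 ^ K) + f ((j + 1) / 2 ^ K)) / 2|
      ≤ mdGap f (K + 1) :=
  Finset.le_sup' (fun j : ℕ => |f ((2 * (j:ℝ) + 1) / 2 ^ (K + 1)) -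
      (f ((j:ℝ) / 2 ^ (K + 1 - 1)) + f (((j:ℝ) + 1) / 2 ^ (K + 1 - 1))) / 2|)
    (Finset.mem_range.2 hj)

lemma abs_dyadicInterp_succ_sub_le (f : ℝ → ℝ) (K : ℕ) {t : ℝ} (ht₀ : 0 ≤ t) (ht₁ : t < 1) :
    |dyadicInterp (K + 1) f t - dyadicInterp K f t| ≤ mdGap f (K + 1) := by
  set j := ⌊t * 2 ^ K⌋₊
  set θ := t * 2 ^ K - j
  have hθ₀ : 0 ≤ θ := sub_nonneg.2 (Nat.floor_le (by positivity))
  have hθ₁ : θ < 1 := by have := Nat.lt_floor_add_one (t * 2 ^ K); simp only [θ]; linarith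
  have hj : j < 2 ^ K := by
    apply Nat.floor_lt (by positivity) |>.2
    push_cast
    nlinarith [pow_pos (two_pos : (0:ℝ) < 2) K]
  have hK : t * 2 ^ K = j + θ := by simp only [θ]; ring
  have hK1 : t * 2 ^ (K + 1) = 2 * j + 2 * θ := by rw [pow_succ]; linear_combination 2 * hK
  have h2pow : (2:ℝ) ^ (K + 1) = 2 * 2 ^ K := by ring
  set a := f (j / 2 ^ K)
  set b := f ((j + 1) / 2 ^ K)
  set m := f ((2 * j + 1) / 2 ^ (K + 1))
  -- the two interpolants differ by the hat function of the cell times its midpoint gap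
  obtain ⟨c, hc₀, hc₁, hdiff⟩ : ∃ c : ℝ, 0 ≤ c ∧ c ≤ 1 ∧
      dyadicInterp (K + 1) f t - dyadicInterp K f t = c * (m - (a + b) / 2) := by
    rw [dyadicInterp_eq_of_mul_pow_eq K f j hθ₀ hθ₁ hK]
    rcases lt_or_ge θ (1 / 2) with hθ | hθ
    · refine ⟨2 * θ, by linarith, by linarith, ?_⟩
      rw [dyadicInterp_eq_of_mul_pow_eq (K + 1) f (2 * j) (θ := 2 * θ) (by linarith) (by linarith)
        (by push_cast; exact hK1)]
      have hleft : ((2 * j : ℕ) : ℝ) / 2 ^ (K + 1) = j / 2 ^ K := by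
        rw [h2pow]; push_cast; field_simp
      rw [hleft, show ((2 * j : ℕ) : ℝ) + 1 = 2 * j + 1 by push_cast; ring]
      ring
    · refine ⟨2 - 2 * θ, by linarith, by linarith, ?_⟩
      rw [dyadicInterp_eq_of_mul_pow_eq (K + 1) f (2 * j + 1) (θ := 2 * θ - 1) (by linarith)
        (by linarith) (by push_cast; linarith)]
      have hright : (((2 * j + 1 : ℕ) : ℝ) + 1) / 2 ^ (K + 1) = (j + 1) / 2 ^ K := by
        rw [h2pow]; push_cast; field_simp; ring
      rw [hright, show ((2 * j + 1 : ℕ) : ℝ) = 2 * j + 1 by push_cast; ring]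
      ring
  rw [hdiff, abs_mul, abs_of_nonneg hc₀]
  exact (mul_le_of_le_one_left (abs_nonneg _) hc₁).trans (abs_midpoint_sub_le_mdGap f hj)

lemma tendsto_dyadicInterp {f : ℝ → ℝ} (hf : ContinuousOn f (Set.Icc 0 1)) {t : ℝ}
    (ht₀ : 0 ≤ t) (ht₁ : t < 1) :
    Tendsto (fun m => dyadicInterp m f t) atTop (𝓝 (f t)) := by
  have hfz : ∀ z : ℕ → ℝ, (∀ m, z m ∈ Set.Icc 0 1) → (∀ m, |z m - t| ≤ (1 / 2) ^ m) →
      Tendsto (fun m => f (z m)) atTop (𝓝 (f t)) := by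
    intro z hz hzt
    have hlim : Tendsto z atTop (𝓝 t) := tendsto_iff_norm_sub_tendsto_zero.2 <|
      squeeze_zero (fun _ => norm_nonneg _) (fun m => (Real.norm_eq_abs _).trans_le (hzt m))
        (tendsto_pow_atTop_nhds_zero_of_lt_one (by norm_num) (by norm_num))
    exact (hf t ⟨ht₀, ht₁.le⟩).tendsto.comp
      (tendsto_nhdsWithin_iff.2 ⟨hlim, Eventually.of_forall hz⟩)
  set j : ℕ → ℕ := fun m => ⌊t * 2 ^ m⌋₊
  set θ : ℕ → ℝ := fun m => t * 2 ^ m - j m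
  have hj : ∀ m, (j m : ℝ) ≤ t * 2 ^ m ∧ t * 2 ^ m < j m + 1 ∧ (j m : ℝ) + 1 ≤ 2 ^ m := by
    intro m
    refine ⟨Nat.floor_le (by positivity), Nat.lt_floor_add_one _, ?_⟩
    have : j m < 2 ^ m := (Nat.floor_lt (by positivity)).2 (by
      push_cast; nlinarith [pow_pos (two_pos : (0:ℝ) < 2) m])
    exact_mod_cast this
  have hdist : ∀ m (s : ℝ), |s - t * 2 ^ m| ≤ 1 → |s / 2 ^ m - t| ≤ (1 / 2) ^ m := by
    intro m s hs
    rw [show s / 2 ^ m - t = (s - t * 2 ^ m) / 2 ^ m by field_simp, abs_div,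
      abs_of_pos (by positivity : (0:ℝ) < 2 ^ m), one_div_pow]
    exact div_le_div_of_nonneg_right hs (by positivity)
  have hx := hfz (fun m => j m / 2 ^ m)
    (fun m => ⟨by positivity, (div_le_one (by positivity)).2 (by linarith [hj m])⟩)
    (fun m => hdist m _ (abs_le.2 ⟨by linarith [hj m], by linarith [hj m]⟩))
  have hy := hfz (fun m => (j m + 1) / 2 ^ m)
    (fun m => ⟨by positivity, (div_le_one (by positivity)).2 (hj m).2.2⟩)
    (fun m => hdist m _ (abs_le.2 ⟨by linarith [hj m], by linarith [hj m]⟩))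
  have hθ : ∀ m, 0 ≤ θ m ∧ θ m < 1 := fun m => ⟨by linarith [hj m], by linarith [hj m]⟩
  have hI : ∀ m, dyadicInterp m f t
      = f (j m / 2 ^ m) + θ m * (f ((j m + 1) / 2 ^ m) - f (j m / 2 ^ m)) := fun m =>
    dyadicInterp_eq_of_mul_pow_eq m f (j m) (hθ m).1 (hθ m).2 (by simp only [θ]; ring)
  simp_rw [hI]
  simpa using hx.add (bdd_le_mul_tendsto_zero (Eventually.of_forall fun m => (hθ m).1)
    (Eventually.of_forall fun m => (hθ m).2.le) (by simpa using hy.sub hx))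

lemma abs_sub_dyadicInterp_le_tsum {f : ℝ → ℝ} (hf : ContinuousOn f (Set.Icc 0 1)) (n : ℕ)
    {g : ℕ → ℝ} (hg : Summable g) (hgap : ∀ i, mdGap f (n + i + 1) ≤ g i) {t : ℝ}
    (ht : t ∈ Set.Icc (0:ℝ) 1) :
    |f t - dyadicInterp n f t| ≤ ∑' i, g i := by
  have hg₀ : ∀ i, 0 ≤ g i := fun i => (mdGap_nonneg f _).trans (hgap i)
  rcases ht.2.eq_or_lt with rfl | ht₁
  · rw [dyadicInterp_one, sub_self, abs_zero]
    exact tsum_nonneg hg₀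
  set I : ℕ → ℝ := fun m => dyadicInterp (n + m) f t
  have hpartial : ∀ m, dist (I 0) (I m) ≤ ∑' i, g i := fun m =>
    calc dist (I 0) (I m) ≤ ∑ i ∈ Finset.range m, dist (I i) (I (i + 1)) :=
          dist_le_range_sum_dist I m
      _ ≤ ∑ i ∈ Finset.range m, g i := Finset.sum_le_sum fun i _ => by
          rw [dist_comm, Real.dist_eq]
          exact (abs_dyadicInterp_succ_sub_le f (n + i) ht.1 ht₁).trans (hgap i)
      _ ≤ ∑' i, g i := hg.sum_le_tsum _ fun i _ => hg₀ i
  have hlim : Tendsto (fun m => dist (I 0) (I m)) atTop (𝓝 (dist (I 0) (f t))) :=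
    tendsto_const_nhds.dist <|
      (tendsto_dyadicInterp hf ht.1 ht₁).comp
        ((tendsto_add_atTop_nat n).congr fun m => add_comm m n)
  rw [← Real.dist_eq, dist_comm]
  exact le_of_tendsto' hlim hpartial

lemma supNorm01_sub_dyadicInterp_le {f : ℝ → ℝ} (hf : ContinuousOn f (Set.Icc 0 1))
    {β ρ : ℝ} (hβ : 0 < β) (n : ℕ)
    (hgap : ∀ k, n < k → mdGap f k ≤ ρ * 2 ^ (-β * (k:ℝ))) :
    supNorm01 (fun t => f t - dyadicInterp n f t)
      ≤ ρ * 2 ^ (-β * ((n:ℝ) + 1)) / (1 - 2 ^ (-β)) := by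
  set r : ℝ := 2 ^ (-β)
  have hr₀ : 0 ≤ r := by positivity
  have hr₁ : r < 1 := Real.rpow_lt_one_of_one_lt_of_neg one_lt_two (by linarith)
  have hgeom : ∀ i : ℕ,
      ρ * 2 ^ (-β * ((n + i + 1 : ℕ) : ℝ)) = ρ * 2 ^ (-β * ((n:ℝ) + 1)) * r ^ i := by
    intro i
    rw [mul_assoc, ← Real.rpow_natCast r, ← Real.rpow_mul zero_le_two, ← Real.rpow_add two_pos]
    push_cast
    ring_nf
  have hsum := (summable_geometric_of_lt_one hr₀ hr₁).mul_left (ρ * 2 ^ (-β * ((n:ℝ) + 1)))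
  have hbound := fun t (ht : t ∈ Set.Icc (0:ℝ) 1) => abs_sub_dyadicInterp_le_tsum hf n hsum
    (fun i => (hgap _ (by omega)).trans_eq (hgeom i)) ht
  rw [tsum_mul_left, tsum_geometric_of_lt_one hr₀ hr₁, ← div_eq_mul_inv] at hbound
  have : Nonempty (Set.Icc (0:ℝ) 1) := ⟨⟨0, le_rfl, zero_le_one⟩⟩
  exact ciSup_le fun t => hbound t t.2

lemma gaussianReal_setOf_le_le (v : ℝ≥0) {V x : ℝ} (hV : 0 < V) (hvV : (v : ℝ) ≤ V)
    (hx : 0 ≤ x) :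
    gaussianReal 0 v {y | x ≤ y} ≤ ENNReal.ofReal (exp (-x ^ 2 / (2 * V))) := by
  rw [← ofReal_measureReal]
  refine ENNReal.ofReal_le_ofReal ?_
  have hchernoff := measure_ge_le_exp_mul_mgf (μ := gaussianReal 0 v) (X := id) x
    (t := x / V) (by positivity) (integrable_exp_mul_gaussianReal _)
  rw [mgf_id_gaussianReal, ← exp_add] at hchernoff
  refine hchernoff.trans (exp_le_exp.2 ?_)
  have hvar : (v : ℝ) * (x / V) ^ 2 ≤ x ^ 2 / V :=
    calc (v : ℝ) * (x / V) ^ 2 ≤ V * (x / V) ^ 2 := by gcongr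
      _ = x ^ 2 / V := by field_simp
  rw [show -(x / V) * x = -(x ^ 2 / V) by ring, show -x ^ 2 / (2 * V) = -(x ^ 2 / V) / 2 by ring]
  linarith

lemma gaussianReal_setOf_le_abs_le (v : ℝ≥0) {V x : ℝ} (hV : 0 < V) (hvV : (v : ℝ) ≤ V)
    (hx : 0 ≤ x) :
    gaussianReal 0 v {y | x ≤ |y|} ≤ 2 * ENNReal.ofReal (exp (-x ^ 2 / (2 * V))) := by
  have hneg : gaussianReal 0 v (Neg.neg ⁻¹' Set.Ici x) = gaussianReal 0 v (Set.Ici x) := by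
    rw [← Measure.map_apply measurable_neg measurableSet_Ici, gaussianReal_map_neg, neg_zero]
  calc gaussianReal 0 v {y | x ≤ |y|}
      ≤ gaussianReal 0 v (Set.Ici x ∪ Neg.neg ⁻¹' Set.Ici x) :=
        measure_mono fun y (hy : x ≤ |y|) => le_abs.1 hy
    _ ≤ gaussianReal 0 v (Set.Ici x) + gaussianReal 0 v (Neg.neg ⁻¹' Set.Ici x) :=
        measure_union_le _ _
    _ ≤ 2 * ENNReal.ofReal (exp (-x ^ 2 / (2 * V))) := by
        rw [hneg, ← two_mul]; gcongr; exact gaussianReal_setOf_le_le v hV hvV hx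

lemma sum_fbmCov_midpoint {H : ℝ} (hH : 0 < H) (p : ℝ) {h : ℝ} (hh : 0 < h) :
    ∑ i, ∑ j, (![1, -1 / 2, -1 / 2] : Fin 3 → ℝ) i * (![1, -1 / 2, -1 / 2] : Fin 3 → ℝ) j *
      fbmCov H (![p, p - h, p + h] i) (![p, p - h, p + h] j)
      = h ^ (2 * H) - (2 * h) ^ (2 * H) / 4 := by
  simp only [Fin.sum_univ_three, Matrix.cons_val_zero, Matrix.cons_val_one, Matrix.head_cons,
    Matrix.cons_val_two, Matrix.tail_cons, fbmCov, sub_self, abs_zero,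
    Real.zero_rpow (by positivity : 2 * H ≠ 0)]
  rw [show p - (p - h) = h by ring, show p - (p + h) = -h by ring,
    show p - h - p = -h by ring, show p - h - (p + h) = -(2 * h) by ring,
    show p + h - p = h by ring, show p + h - (p - h) = 2 * h by ring]
  simp only [abs_neg, abs_of_pos hh, abs_of_pos (by positivity : (0:ℝ) < 2 * h)]
  ring

def recordLevels (H δ ρ : ℝ) (g : ℝ → ℝ) : Set ℕ :=
  {k | 1 ≤ k ∧ ρ * (2:ℝ) ^ (-(H - δ) * (k:ℝ)) ≤ mdGap g k}

lemma lastRB_eq_sSup_recordLevels (H δ ρ : ℝ) (g : ℝ → ℝ) :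
    lastRB H δ ρ g = sSup (recordLevels H δ ρ g) := rfl

lemma mdGap_le_of_lastRB_lt {H δ ρ : ℝ} {g : ℝ → ℝ} (hfin : (recordLevels H δ ρ g).Finite)
    {k : ℕ} (hk : lastRB H δ ρ g < k) :
    mdGap g k ≤ ρ * (2:ℝ) ^ (-(H - δ) * (k:ℝ)) := by
  rw [lastRB_eq_sSup_recordLevels] at hk
  by_contra hgap
  have hmem : k ∈ recordLevels H δ ρ g := ⟨by omega, (not_le.1 hgap).le⟩
  exact hk.not_ge (le_csSup hfin.bddAbove hmem)

lemma setOf_le_mdGap_subset {Ω : Type*} (B : Ω → ℝ → ℝ) (x : ℝ) (k : ℕ) :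
    {ω | x ≤ mdGap (B ω) (k + 1)} ⊆ ⋃ j ∈ Finset.range (2 ^ k), {ω | x ≤
      |B ω ((2 * j + 1) / 2 ^ (k + 1)) - (B ω (j / 2 ^ k) + B ω ((j + 1) / 2 ^ k)) / 2|} := by
  intro ω hω
  simpa [mdGap, Finset.le_sup'_iff] using hω

lemma measurable_mdGap {Ω : Type*} [MeasurableSpace Ω] {B : Ω → ℝ → ℝ}
    (hm : ∀ t, Measurable fun ω => B ω t) (k : ℕ) :
    Measurable fun ω => mdGap (B ω) k := by
  have : (fun ω => mdGap (B ω) k) = (Finset.range (2 ^ (k - 1))).sup'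
      (Finset.nonempty_range_iff.mpr (by positivity)) fun (j : ℕ) ω =>
        |B ω ((2 * (j:ℝ) + 1) / 2 ^ k) -
          (B ω ((j:ℝ) / 2 ^ (k - 1)) + B ω (((j:ℝ) + 1) / 2 ^ (k - 1))) / 2| := by
    ext ω; simp [mdGap, Finset.sup'_apply]
  rw [this]
  exact Finset.measurable_sup' _ fun j _ => by fun_prop

lemma measurableSet_mem_recordLevels {Ω : Type*} [MeasurableSpace Ω] {B : Ω → ℝ → ℝ}
    (hm : ∀ t, Measurable fun ω => B ω t) (H δ ρ : ℝ) (k : ℕ) :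
    MeasurableSet {ω | k ∈ recordLevels H δ ρ (B ω)} :=
  (MeasurableSet.const (1 ≤ k)).inter (measurableSet_le measurable_const (measurable_mdGap hm k))

lemma neg_sq_div_two_mul_rpow_eq (H δ ρ K : ℝ) :
    -(ρ * (2:ℝ) ^ (-(H - δ) * K)) ^ 2 / (2 * ((2:ℝ) ^ (-K)) ^ (2 * H))
      = -(ρ ^ 2 / 2) * (2:ℝ) ^ (2 * δ * K) := by
  have hsplit : (2:ℝ) ^ (2 * δ * K) = ((2:ℝ) ^ (-(H - δ) * K)) ^ 2 / ((2:ℝ) ^ (-K)) ^ (2 * H) := by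
    rw [← Real.rpow_natCast, ← Real.rpow_mul zero_le_two, ← Real.rpow_mul zero_le_two,
      ← Real.rpow_sub two_pos]
    push_cast; ring_nf
  rw [hsplit]
  ring

lemma mul_sub_mul_exp_mul_le (b : ℝ) {a c : ℝ} (ha : 0 < a) (hc : 0 < c) {y : ℝ} (hy : 0 ≤ y) :
    b * y - c * exp (a * y) ≤ (b + 1) ^ 2 / (2 * c * a ^ 2) - y := by
  have hexp := quadratic_le_exp_of_nonneg (mul_nonneg ha.le hy)
  have hsq : 0 ≤ (c * a ^ 2 * y - (b + 1)) ^ 2 / (2 * c * a ^ 2) := by positivity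
  have hexpand : (c * a ^ 2 * y - (b + 1)) ^ 2 / (2 * c * a ^ 2)
      = (b + 1) ^ 2 / (2 * c * a ^ 2) - (b + 1) * y + c * (a * y) ^ 2 / 2 := by
    field_simp; ring
  nlinarith [mul_le_mul_of_nonneg_left hexp hc.le, mul_nonneg ha.le hy]

lemma summable_exp_mul_sub_mul_exp (b : ℝ) {a c : ℝ} (ha : 0 < a) (hc : 0 < c) :
    Summable fun k : ℕ => exp (b * k - c * exp (a * k)) := by
  set C := (b + 1) ^ 2 / (2 * c * a ^ 2)
  refine Summable.of_nonneg_of_le (fun _ => (exp_pos _).le) (fun k => ?_)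
    ((summable_geometric_of_lt_one (exp_pos (-1)).le (exp_lt_one_iff.2 neg_one_lt_zero)).mul_left
      (exp C))
  rw [← exp_nat_mul, ← exp_add]
  exact exp_le_exp.2 ((mul_sub_mul_exp_mul_le b ha hc k.cast_nonneg).trans_eq (by ring))

lemma Nat.sSup_mem_of_ne_zero {s : Set ℕ} (h : sSup s ≠ 0) : sSup s ∈ s := by
  refine Nat.sSup_mem (Set.nonempty_iff_ne_empty.2 fun hs => h ?_) (not_not.1 fun hs => h ?_)
  · rw [hs, csSup_empty]; rfl
  · exact Nat.sSup_of_not_bddAbove hs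

lemma lintegral_exp_mul_sSup_le {Ω : Type*} [MeasurableSpace Ω] {P : Measure Ω}
    [IsProbabilityMeasure P] {S : Ω → Set ℕ} (hS : ∀ k, MeasurableSet {ω | k ∈ S ω}) (t : ℝ) :
    ∫⁻ ω, ENNReal.ofReal (exp (t * (sSup (S ω) : ℕ))) ∂P
      ≤ 1 + ∑' k : ℕ, ENNReal.ofReal (exp (t * k)) * P {ω | k ∈ S ω} := by
  have hpt : ∀ ω, ENNReal.ofReal (exp (t * (sSup (S ω) : ℕ)))
      ≤ 1 + ∑' k : ℕ, {ω | k ∈ S ω}.indicator (fun _ => ENNReal.ofReal (exp (t * k))) ω := by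
    intro ω
    rcases eq_or_ne (sSup (S ω)) 0 with h0 | h0
    · simp [h0]
    · refine le_add_left (le_trans ?_ (ENNReal.le_tsum (sSup (S ω))))
      rw [Set.indicator_of_mem (s := {ω' | sSup (S ω) ∈ S ω'}) (Nat.sSup_mem_of_ne_zero h0)]
  refine (lintegral_mono hpt).trans_eq ?_
  rw [lintegral_add_left measurable_const, lintegral_const, measure_univ, mul_one,
    lintegral_tsum fun k => (measurable_const.indicator (hS k)).aemeasurable]
  simp_rw [lintegral_indicator_const (hS _)]

section FBM

variable {Ω : Type*} [MeasurableSpace Ω] {P : Measure Ω} {H : ℝ} {B : Ω → ℝ → ℝ}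

lemma IsFBM.map_midpoint_sub (hB : IsFBM P H B) (hH : 0 < H) {p h : ℝ} (hh : 0 < h)
    (hl : 0 ≤ p - h) (hr : p + h ≤ 1) :
    P.map (fun ω => B ω p - (B ω (p - h) + B ω (p + h)) / 2)
      = gaussianReal 0 (h ^ (2 * H) - (2 * h) ^ (2 * H) / 4).toNNReal := by
  have hpts : ∀ i, (![p, p - h, p + h] : Fin 3 → ℝ) i ∈ Set.Icc (0:ℝ) 1 := by
    intro i
    fin_cases i <;> simp only [Fin.reduceFinMk, Matrix.cons_val, Set.mem_Icc] <;> constructor <;> linarith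
  rw [← sum_fbmCov_midpoint hH p hh, ← hB.gaussian 3 _ hpts]
  congr 1
  ext ω
  simp only [Fin.sum_univ_three, Matrix.cons_val_zero, Matrix.cons_val_one, Matrix.head_cons,
    Matrix.cons_val_two, Matrix.tail_cons]
  ring

lemma IsFBM.measure_le_abs_midpoint_sub_le (hB : IsFBM P H B) (hH : 0 < H) {p h x : ℝ}
    (hh : 0 < h) (hl : 0 ≤ p - h) (hr : p + h ≤ 1) (hx : 0 ≤ x) :
    P {ω | x ≤ |B ω p - (B ω (p - h) + B ω (p + h)) / 2|}
      ≤ 2 * ENNReal.ofReal (exp (-x ^ 2 / (2 * h ^ (2 * H)))) := by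
  have hmeas : Measurable fun ω => B ω p - (B ω (p - h) + B ω (p + h)) / 2 := by
    have := hB.measurable; fun_prop
  have hvar : ((h ^ (2 * H) - (2 * h) ^ (2 * H) / 4).toNNReal : ℝ) ≤ h ^ (2 * H) := by
    rw [Real.coe_toNNReal']
    exact max_le (by linarith [(by positivity : (0:ℝ) ≤ (2 * h) ^ (2 * H) / 4)]) (by positivity)
  change P ((fun ω => B ω p - (B ω (p - h) + B ω (p + h)) / 2) ⁻¹' {y | x ≤ |y|}) ≤ _
  rw [← Measure.map_apply hmeas
    (measurableSet_le measurable_const measurable_abs), hB.map_midpoint_sub hH hh hl hr]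
  exact gaussianReal_setOf_le_abs_le _ (by positivity) hvar hx

lemma IsFBM.measure_mem_recordLevels_le (hB : IsFBM P H B) (hH : 0 < H) (δ : ℝ) {ρ : ℝ}
    (hρ : 0 ≤ ρ) (k : ℕ) :
    P {ω | k ∈ recordLevels H δ ρ (B ω)}
      ≤ ENNReal.ofReal (2 ^ k * exp (-(ρ ^ 2 / 2) * (2:ℝ) ^ (2 * δ * (k:ℝ)))) := by
  rcases k with _ | k
  · simp [recordLevels]
  set x := ρ * (2:ℝ) ^ (-(H - δ) * ((k + 1 : ℕ) : ℝ))
  set h : ℝ := 1 / 2 ^ (k + 1)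
  have hh : 0 < h := by positivity
  have hcell : ∀ j ∈ Finset.range (2 ^ k),
      (j : ℝ) / 2 ^ k = (2 * j + 1) / 2 ^ (k + 1) - h ∧
      ((j : ℝ) + 1) / 2 ^ k = (2 * j + 1) / 2 ^ (k + 1) + h := by
    intro j _
    constructor <;> (simp only [h]; rw [pow_succ]; field_simp; ring)
  have hterm : ∀ j ∈ Finset.range (2 ^ k),
      P {ω | x ≤ |B ω ((2 * j + 1) / 2 ^ (k + 1)) - (B ω (j / 2 ^ k) + B ω ((j + 1) / 2 ^ k)) / 2|}
        ≤ 2 * ENNReal.ofReal (exp (-x ^ 2 / (2 * h ^ (2 * H)))) := by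
    intro j hj
    have hj' : (j : ℝ) + 1 ≤ 2 ^ k := by exact_mod_cast Finset.mem_range.1 hj
    rw [(hcell j hj).1, (hcell j hj).2]
    refine hB.measure_le_abs_midpoint_sub_le hH hh ?_ ?_ (by positivity)
    · rw [← (hcell j hj).1]; positivity
    · rw [← (hcell j hj).2, div_le_one (by positivity)]; exact hj'
  have hh_rpow : h = (2:ℝ) ^ (-((k + 1 : ℕ) : ℝ)) := by
    rw [Real.rpow_neg zero_le_two, Real.rpow_natCast, ← one_div]
  calc P {ω | k + 1 ∈ recordLevels H δ ρ (B ω)}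
      ≤ P {ω | x ≤ mdGap (B ω) (k + 1)} := measure_mono fun ω hω => hω.2
    _ ≤ ∑ j ∈ Finset.range (2 ^ k), 2 * ENNReal.ofReal (exp (-x ^ 2 / (2 * h ^ (2 * H)))) :=
        (measure_mono (setOf_le_mdGap_subset B x k)).trans
          ((measure_biUnion_finset_le _ _).trans (Finset.sum_le_sum hterm))
    _ = ENNReal.ofReal
          (2 ^ (k + 1) * exp (-(ρ ^ 2 / 2) * (2:ℝ) ^ (2 * δ * ((k + 1 : ℕ) : ℝ)))) := by
        rw [Finset.sum_const, Finset.card_range, nsmul_eq_mul, hh_rpow, neg_sq_div_two_mul_rpow_eq,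
          ENNReal.ofReal_mul (by positivity), ENNReal.ofReal_pow zero_le_two, ENNReal.ofReal_ofNat,
          Nat.cast_pow, Nat.cast_ofNat, pow_succ (2 : ℝ≥0∞), mul_assoc (2 ^ k : ℝ≥0∞)]

lemma IsFBM.tsum_exp_mul_measure_mem_recordLevels_ne_top (hB : IsFBM P H B) (hH : 0 < H) {δ ρ : ℝ}
    (hδ : 0 < δ) (hρ : 0 < ρ) (t : ℝ) :
    ∑' k : ℕ, ENNReal.ofReal (exp (t * k)) * P {ω | k ∈ recordLevels H δ ρ (B ω)} ≠ ⊤ := by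
  have hterm : ∀ k : ℕ, ENNReal.ofReal (exp (t * k)) * P {ω | k ∈ recordLevels H δ ρ (B ω)}
      ≤ ENNReal.ofReal (exp ((t + log 2) * k - ρ ^ 2 / 2 * exp (2 * δ * log 2 * k))) := by
    intro k
    calc _ ≤ ENNReal.ofReal (exp (t * k))
          * ENNReal.ofReal (2 ^ k * exp (-(ρ ^ 2 / 2) * (2:ℝ) ^ (2 * δ * (k:ℝ)))) := by
          gcongr; exact hB.measure_mem_recordLevels_le hH δ hρ.le k
      _ = _ := by
          rw [← ENNReal.ofReal_mul (exp_pos _).le, ← Real.rpow_natCast,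
            Real.rpow_def_of_pos two_pos, Real.rpow_def_of_pos two_pos, ← exp_add, ← exp_add,
            show log 2 * (2 * δ * k) = 2 * δ * log 2 * k by ring]
          ring_nf
  refine ne_top_of_le_ne_top ?_ (ENNReal.tsum_le_tsum hterm)
  rw [← ENNReal.ofReal_tsum_of_nonneg (fun _ => (exp_pos _).le)
    (summable_exp_mul_sub_mul_exp _ (by positivity) (by positivity))]
  exact ENNReal.ofReal_ne_top

end FBM

/-- Theorem (last record-breaker has finite exponential moments, and beyond it the
uniform truncation error is controlled): (i) `E[exp(tN)] < ∞` for all `t > 0`;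
(ii) a.s., for every `n > N`, `‖B − B_n‖_∞ ≤ ρ·2^{−(H−δ)(n+1)}/(1 − 2^{−(H−δ)})`. -/
theorem stmt2 {Ω : Type*} [MeasurableSpace Ω] (P : Measure Ω) [IsProbabilityMeasure P]
    (H δ ν ν' ρ : ℝ) (hH : H ∈ Set.Ioo (0:ℝ) 1) (hδ : δ ∈ Set.Ioo (0:ℝ) H)
    (hν : 0 < ν) (hν' : 0 < ν') (hρ : ρ = 2 * (ν + ν'))
    (B : Ω → ℝ → ℝ) (hB : IsFBM P H B) :
    (∀ t : ℝ, 0 < t →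
      ∫⁻ ω, ENNReal.ofReal (Real.exp (t * (lastRB H δ ρ (B ω) : ℝ))) ∂P < ⊤) ∧
    (∀ᵐ ω ∂P, ∀ n : ℕ, lastRB H δ ρ (B ω) < n →
      supNorm01 (fun t => B ω t - dyadicInterp n (B ω) t) ≤
        ρ * (2:ℝ) ^ (-(H - δ) * ((n:ℝ) + 1)) / (1 - (2:ℝ) ^ (-(H - δ)))) := by
  have hρ₀ : 0 < ρ := by rw [hρ]; positivity
  have hmeas := measurableSet_mem_recordLevels hB.measurable H δ ρ
  have hsum := hB.tsum_exp_mul_measure_mem_recordLevels_ne_top hH.1 hδ.1 hρ₀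
  refine ⟨fun t _ => ?_, ?_⟩
  · simp_rw [lastRB_eq_sSup_recordLevels]
    exact (lintegral_exp_mul_sSup_le hmeas t).trans_lt
      (ENNReal.add_lt_top.2 ⟨ENNReal.one_lt_top, (hsum t).lt_top⟩)
  have hsum₀ : ∑' k : ℕ, P {ω | k ∈ recordLevels H δ ρ (B ω)} ≠ ⊤ := by simpa using hsum 0
  filter_upwards [ae_finite_setOfPred_mem hsum₀] with ω hfin n hn
  exact supNorm01_sub_dyadicInterp_le (hB.continuousOn ω) (sub_pos.2 hδ.2) n
    fun k hk => mdGap_le_of_lastRB_lt hfin (hn.trans hk)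

end
end

section
/- For every H ∈ (0,1) and every integer j ≥ 1, (2j+1)^{2H} − ((2j+1)^{2H} + (2j)^{2H} − 1)² / (4·(2j)^{2H}) ≤ 2. -/
/-- For every `H ∈ (0,1)` and every integer `j ≥ 1`,
`(2j+1)^{2H} − ((2j+1)^{2H} + (2j)^{2H} − 1)²/(4·(2j)^{2H}) ≤ 2`. -/
theorem stmt4 (H : ℝ) (hH : H ∈ Set.Ioo (0:ℝ) 1) (j : ℕ) (hj : 1 ≤ j) :
    (2 * (j:ℝ) + 1) ^ (2 * H) -
      ((2 * (j:ℝ) + 1) ^ (2 * H) + (2 * (j:ℝ)) ^ (2 * H) - 1) ^ 2 /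
        (4 * (2 * (j:ℝ)) ^ (2 * H)) ≤ 2 := by
  have hjpos : (0:ℝ) < (j:ℝ) := by exact_mod_cast hj
  set a := (2 * (j:ℝ) + 1) ^ (2 * H) with ha
  set b := (2 * (j:ℝ)) ^ (2 * H) with hb
  have hbpos : 0 < b := Real.rpow_pos_of_pos (by linarith) _
  rw [sub_le_iff_le_add, ← sub_le_iff_le_add', le_div_iff₀ (by linarith)]
  nlinarith [sq_nonneg (a - b - 1), hbpos]
end

section
/- Let X₁, X₂, …, X_n be real-valued centered Gaussian random variables (not necessarily independent) on a common probability space, whose variances are all bounded above by σ². Then E[ max_{1 ≤ i ≤ n} |X_i| ] ≤ 2·√(2·log(2n))·σ. -/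
/-!
By Jensen and a union bound on moment generating functions,
`exp (t 𝔼[maxᵢ |Xᵢ|]) ≤ 𝔼[exp (t maxᵢ |Xᵢ|)] ≤ ∑ᵢ (𝔼[exp (t Xᵢ)] + 𝔼[exp (-t Xᵢ)]) ≤ 2n exp (σ² t² / 2)`
for every `t > 0`, so `𝔼[maxᵢ |Xᵢ|] ≤ log (2n) / t + σ² t / 2`. Optimising over `t` gives
`𝔼[maxᵢ |Xᵢ|] ≤ σ √(2 log (2n))`, which only uses that each `Xᵢ` is `σ²`-sub-Gaussian.
-/

open MeasureTheory ProbabilityTheory Real Finset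

open scoped NNReal

lemma le_sqrt_of_forall_mul_le_add {a c L : ℝ} (hc : 0 ≤ c) (hL : 0 < L)
    (h : ∀ t > 0, t * a ≤ L + c * t ^ 2 / 2) : a ≤ √(2 * c * L) := by
  rcases hc.eq_or_lt with rfl | hc
  · by_contra! ha
    replace ha : 0 < a := by simpa using ha
    have := h ((L + 1) / a) (by positivity)
    rw [div_mul_cancel₀ _ ha.ne'] at this
    linarith
  · set r := √(2 * c * L)
    have hr : 0 < r := by positivity
    have hr2 : r ^ 2 = 2 * c * L := sq_sqrt (by positivity)
    -- the optimal parameter `t = √(2L / c)`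
    have key : r / c * a ≤ r / c * r :=
      calc r / c * a ≤ L + c * (r / c) ^ 2 / 2 := h (r / c) (by positivity)
        _ = r / c * r := by field_simp; nlinarith [hr2]
    exact le_of_mul_le_mul_left key (by positivity)

lemma exp_mul_sup'_abs_le_sum {ι : Type*} {s : Finset ι} (hs : s.Nonempty) (x : ι → ℝ)
    (t : ℝ) :
    exp (t * s.sup' hs fun i => |x i|) ≤ ∑ i ∈ s, (exp (t * x i) + exp (-t * x i)) := by
  obtain ⟨i, hi, hmax⟩ := s.exists_mem_eq_sup' hs fun i => |x i|
  have h_abs : exp (t * |x i|) ≤ exp (t * x i) + exp (-t * x i) := by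
    rcases abs_cases (x i) with ⟨h, -⟩ | ⟨h, -⟩
    · rw [h]; linarith [exp_pos (-t * x i)]
    · rw [h, mul_neg, ← neg_mul]; linarith [exp_pos (t * x i)]
  rw [hmax]
  exact h_abs.trans <| single_le_sum (f := fun j => exp (t * x j) + exp (-t * x j))
    (fun j _ => by positivity) hi

lemma Finset.integrable_sup' {Ω ι : Type*} [MeasurableSpace Ω] {μ : Measure Ω}
    {s : Finset ι} (hs : s.Nonempty) {f : ι → Ω → ℝ} (hf : ∀ i ∈ s, Integrable (f i) μ) :
    Integrable (fun ω => s.sup' hs fun i => f i ω) μ := by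
  simp_rw [← Finset.sup'_apply]
  exact Finset.sup'_induction hs _ (p := (Integrable · μ)) (fun _ h₁ _ h₂ => h₁.sup h₂) hf

lemma ProbabilityTheory.exp_mul_integral_le_mgf {Ω : Type*} [MeasurableSpace Ω]
    {μ : Measure Ω} [IsProbabilityMeasure μ] {X : Ω → ℝ} (hX : Integrable X μ) (t : ℝ)
    (h_exp : Integrable (fun ω => exp (t * X ω)) μ) :
    exp (t * ∫ ω, X ω ∂μ) ≤ mgf X μ t := by
  rw [← integral_const_mul]
  exact convexOn_exp.map_integral_le continuous_exp.continuousOn isClosed_univ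
    (by simp) (hX.const_mul t) h_exp

lemma ProbabilityTheory.hasSubgaussianMGF_of_map_eq_gaussianReal {Ω : Type*}
    [MeasurableSpace Ω] {μ : Measure Ω} {X : Ω → ℝ} {v : ℝ≥0}
    (h : μ.map X = gaussianReal 0 v) : HasSubgaussianMGF X v μ := by
  have hX : AEMeasurable X μ := aemeasurable_of_map_neZero (by rw [h]; infer_instance)
  rw [← HasSubgaussianMGF.id_map_iff hX, h]
  exact ⟨integrable_exp_mul_gaussianReal, fun t => by simp [mgf_id_gaussianReal]⟩

namespace ProbabilityTheory.HasSubgaussianMGF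

variable {Ω ι : Type*} [MeasurableSpace Ω] {μ : Measure Ω} {X : ι → Ω → ℝ} {c c' : ℝ≥0}
  {s : Finset ι}

lemma mono {Y : Ω → ℝ} (h : HasSubgaussianMGF Y c μ) (hc : c ≤ c') :
    HasSubgaussianMGF Y c' μ where
  integrable_exp_mul := h.integrable_exp_mul
  mgf_le t := (h.mgf_le t).trans (exp_le_exp.mpr (by gcongr))

lemma integrable_exp_mul_add_exp_neg_mul {Y : Ω → ℝ} (h : HasSubgaussianMGF Y c μ) (t : ℝ) :
    Integrable (fun ω => exp (t * Y ω) + exp (-t * Y ω)) μ :=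
  (h.integrable_exp_mul t).add (h.integrable_exp_mul (-t))

lemma integrable_sum_exp_mul_add_exp_neg_mul (h : ∀ i ∈ s, HasSubgaussianMGF (X i) c μ)
    (t : ℝ) : Integrable (fun ω => ∑ i ∈ s, (exp (t * X i ω) + exp (-t * X i ω))) μ :=
  integrable_finsetSum _ fun i hi => (h i hi).integrable_exp_mul_add_exp_neg_mul t

variable (hs : s.Nonempty)

lemma integrable_exp_mul_sup'_abs (h : ∀ i ∈ s, HasSubgaussianMGF (X i) c μ) (t : ℝ) :
    Integrable (fun ω => exp (t * s.sup' hs fun i => |X i ω|)) μ := by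
  refine (integrable_sum_exp_mul_add_exp_neg_mul h t).mono' ?_ (ae_of_all _ fun ω => ?_)
  · exact ((Finset.integrable_sup' hs fun i hi => (h i hi).integrable.abs).aemeasurable
      |>.const_mul t).exp.aestronglyMeasurable
  · rw [norm_of_nonneg (exp_nonneg _)]
    exact exp_mul_sup'_abs_le_sum hs _ t

lemma mgf_sup'_abs_le (h : ∀ i ∈ s, HasSubgaussianMGF (X i) c μ) (t : ℝ) :
    mgf (fun ω => s.sup' hs fun i => |X i ω|) μ t ≤ 2 * #s * exp (c * t ^ 2 / 2) :=
  calc mgf (fun ω => s.sup' hs fun i => |X i ω|) μ t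
      ≤ ∫ ω, ∑ i ∈ s, (exp (t * X i ω) + exp (-t * X i ω)) ∂μ :=
        integral_mono (integrable_exp_mul_sup'_abs hs h t)
          (integrable_sum_exp_mul_add_exp_neg_mul h t)
          fun ω => exp_mul_sup'_abs_le_sum hs _ t
    _ = ∑ i ∈ s, (mgf (X i) μ t + mgf (X i) μ (-t)) := by
        rw [integral_finsetSum _ fun i hi => (h i hi).integrable_exp_mul_add_exp_neg_mul t]
        refine sum_congr rfl fun i hi => ?_
        rw [integral_add ((h i hi).integrable_exp_mul t) ((h i hi).integrable_exp_mul (-t))]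
        rfl
    _ ≤ ∑ i ∈ s, 2 * exp (c * t ^ 2 / 2) := by
        refine sum_le_sum fun i hi => ?_
        have h_neg := (h i hi).mgf_le (-t)
        rw [neg_sq] at h_neg
        linarith [(h i hi).mgf_le t]
    _ = 2 * #s * exp (c * t ^ 2 / 2) := by
        rw [sum_const, nsmul_eq_mul]; ring

theorem integral_sup'_abs_le [IsProbabilityMeasure μ]
    (h : ∀ i ∈ s, HasSubgaussianMGF (X i) c μ) :
    ∫ ω, (s.sup' hs fun i => |X i ω|) ∂μ ≤ √(2 * c * log (2 * #s)) := by
  have h_card : (1 : ℝ) < 2 * #s := by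
    have : (1 : ℝ) ≤ #s := by exact_mod_cast hs.card_pos
    linarith
  refine le_sqrt_of_forall_mul_le_add c.coe_nonneg (log_pos h_card) fun t _ => ?_
  have h_jensen := exp_mul_integral_le_mgf
    (Finset.integrable_sup' hs fun i hi => (h i hi).integrable.abs) t
    (integrable_exp_mul_sup'_abs hs h t)
  rw [← exp_le_exp, exp_add, exp_log (by linarith)]
  exact h_jensen.trans (mgf_sup'_abs_le hs h t)

end ProbabilityTheory.HasSubgaussianMGF

theorem stmt5_general {Ω : Type*} [MeasurableSpace Ω] (P : Measure Ω) [IsProbabilityMeasure P]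
    (n : ℕ) (hn : 0 < n) (σ : ℝ) (hσ : 0 ≤ σ)
    (X : Fin n → Ω → ℝ)
    (hgauss : ∀ i, ∃ v : NNReal, (v : ℝ) ≤ σ ^ 2 ∧
      Measure.map (X i) P = gaussianReal 0 v) :
    ∫ ω, (Finset.univ.sup' (Finset.univ_nonempty_iff.mpr (Fin.pos_iff_nonempty.mp hn))
        fun i => |X i ω|) ∂P ≤
      2 * Real.sqrt (2 * Real.log (2 * (n:ℝ))) * σ := by
  have h_subgaussian : ∀ i ∈ univ, HasSubgaussianMGF (X i) ⟨σ ^ 2, sq_nonneg σ⟩ P := by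
    intro i _
    obtain ⟨v, hv, h_map⟩ := hgauss i
    exact (hasSubgaussianMGF_of_map_eq_gaussianReal h_map).mono hv
  have h_bound_nonneg : 0 ≤ √(2 * log (2 * (n : ℝ))) * σ := by positivity
  calc _ ≤ √(2 * σ ^ 2 * log (2 * #(univ : Finset (Fin n)))) :=
        HasSubgaussianMGF.integral_sup'_abs_le _ h_subgaussian
    _ = √(2 * log (2 * (n : ℝ))) * σ := by
        rw [card_univ, Fintype.card_fin, mul_comm 2 (σ ^ 2), mul_assoc, sqrt_mul (sq_nonneg σ),
          sqrt_sq hσ, mul_comm]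
    _ ≤ 2 * √(2 * log (2 * (n : ℝ))) * σ := by linarith

/-- Lemma (maximum of Gaussian random variables): if `X₁,…,X_n` are centered real
Gaussian random variables (not necessarily independent) with variances bounded by `σ²`,
then `E[max_i |X_i|] ≤ 2·√(2·log(2n))·σ`. -/
theorem stmt5 {Ω : Type*} [MeasurableSpace Ω] (P : Measure Ω) [IsProbabilityMeasure P]
    (n : ℕ) (hn : 0 < n) (σ : ℝ) (hσ : 0 ≤ σ)
    (X : Fin n → Ω → ℝ) (hmeas : ∀ i, Measurable (X i))
    (hgauss : ∀ i, ∃ v : NNReal, (v : ℝ) ≤ σ ^ 2 ∧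
      Measure.map (X i) P = gaussianReal 0 v) :
    ∫ ω, (Finset.univ.sup' (Finset.univ_nonempty_iff.mpr (Fin.pos_iff_nonempty.mp hn))
        fun i => |X i ω|) ∂P ≤
      2 * Real.sqrt (2 * Real.log (2 * (n:ℝ))) * σ :=
  stmt5_general P n hn σ hσ X hgauss
end

section
/- Fix H ∈ (0,1) and let r(s,t) = (s^{2H} + t^{2H} − |s−t|^{2H})/2 be the covariance function of fractional Brownian motion. Then for all integers n, m ≥ 1, every 1 ≤ k ≤ 2^{n+m−1}, and every 0 ≤ j ≤ 2^n, | (1/2)·r((2k−2)·2^{−(n+m)}, j·2^{−n}) − r((2k−1)·2^{−(n+m)}, j·2^{−n}) + (1/2)·r(2k·2^{−(n+m)}, j·2^{−n}) | ≤ 2^{−2(n+m)H}. Consequently, for every vector w = (w₀,…,w_{2^n}) ∈ ℝ^{2^n+1}, | Σ_{j=0}^{2^n} [ (1/2)·r((2k−2)·2^{−(n+m)}, j·2^{−n}) − r((2k−1)·2^{−(n+m)}, j·2^{−n}) + (1/2)·r(2k·2^{−(n+m)}, j·2^{−n}) ]·w_j | ≤ (2^n + 1)·(max_{0 ≤ j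 ≤ 2^n} |w_j|)·2^{−2(n+m)H}. -/
noncomputable section

open Real

/-- Subadditivity of `x ↦ x^p` for `0 ≤ p ≤ 1` on nonneg reals. -/
lemma my_rpow_subadd {p : ℝ} (hp0 : 0 ≤ p) (hp1 : p ≤ 1) {a b : ℝ} (ha : 0 ≤ a) (hb : 0 ≤ b) :
    (a + b) ^ p ≤ a ^ p + b ^ p := by
  lift a to NNReal using ha
  lift b to NNReal using hb
  have := NNReal.rpow_add_le_add_rpow a b hp0 hp1
  exact_mod_cast this

/-- Hölder-type: `|a|^p - |b|^p ≤ |a-b|^p` for `0 ≤ p ≤ 1`. -/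
lemma my_holder {p : ℝ} (hp0 : 0 ≤ p) (hp1 : p ≤ 1) (a b : ℝ) :
    |a| ^ p - |b| ^ p ≤ |a - b| ^ p := by
  have h1 : |a| ≤ |b| + |a - b| := by
    calc |a| = |b + (a - b)| := by ring_nf
    _ ≤ |b| + |a - b| := abs_add_le _ _
  have h2 : |a| ^ p ≤ (|b| + |a - b|) ^ p :=
    Real.rpow_le_rpow (abs_nonneg _) h1 hp0
  have h3 := my_rpow_subadd hp0 hp1 (abs_nonneg b) (abs_nonneg (a - b))
  linarith

/-- Clarkson-type inequality for `1 ≤ p ≤ 2`, `0 ≤ b ≤ a`. -/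
lemma my_clarkson {p : ℝ} (hp1 : 1 ≤ p) (hp2 : p ≤ 2) {a b : ℝ} (hb : 0 ≤ b) (hba : b ≤ a) :
    (a + b) ^ p + (a - b) ^ p ≤ 2 * a ^ p + 2 * b ^ p := by
  set F : ℝ → ℝ := fun t => (a + t) ^ p + (a - t) ^ p - 2 * t ^ p with hF
  have ha : 0 ≤ a := hb.trans hba
  -- differentiability
  have hd : ∀ t : ℝ, HasDerivAt F
      (1 * p * (a + t) ^ (p - 1) + (-1) * p * (a - t) ^ (p - 1) - 2 * (1 * p * t ^ (p - 1))) t := by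
    intro t
    have h1 : HasDerivAt (fun t : ℝ => (a + t) ^ p) (1 * p * (a + t) ^ (p - 1)) t :=
      (((hasDerivAt_id t).const_add a)).rpow_const (Or.inr hp1)
    have h2 : HasDerivAt (fun t : ℝ => (a - t) ^ p) ((-1) * p * (a - t) ^ (p - 1)) t :=
      (((hasDerivAt_id t).const_sub a)).rpow_const (Or.inr hp1)
    have h3 : HasDerivAt (fun t : ℝ => t ^ p) (1 * p * t ^ (p - 1)) t :=
      (hasDerivAt_id t).rpow_const (Or.inr hp1)
    exact (h1.add h2).sub (h3.const_mul 2)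
  have hdiff : Differentiable ℝ F := fun t => (hd t).differentiableAt
  have hanti : AntitoneOn F (Set.Icc 0 a) := by
    apply antitoneOn_of_deriv_nonpos (convex_Icc 0 a) hdiff.continuous.continuousOn
      hdiff.differentiableOn
    intro t ht
    rw [interior_Icc] at ht
    obtain ⟨ht0, hta⟩ := ht
    rw [(hd t).deriv]
    have hβ0 : 0 ≤ p - 1 := by linarith
    have hβ1 : p - 1 ≤ 1 := by linarith
    -- (a+t)^(p-1) ≤ (a-t)^(p-1) + (2t)^(p-1)
    have hsub : (a + t) ^ (p - 1) ≤ (a - t) ^ (p - 1) + (2 * t) ^ (p - 1) := by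
      have : a + t = (a - t) + 2 * t := by ring
      rw [this]
      exact my_rpow_subadd hβ0 hβ1 (by linarith) (by linarith)
    have h2t : (2 * t) ^ (p - 1) ≤ 2 * t ^ (p - 1) := by
      rw [Real.mul_rpow (by norm_num) ht0.le]
      have : (2:ℝ) ^ (p - 1) ≤ 2 ^ (1:ℝ) :=
        Real.rpow_le_rpow_of_exponent_le (by norm_num) (by linarith)
      rw [Real.rpow_one] at this
      have ht' : 0 ≤ t ^ (p - 1) := Real.rpow_nonneg ht0.le _
      nlinarith
    have hpp : 0 < p := by linarith
    nlinarith [Real.rpow_nonneg (by linarith : (0:ℝ) ≤ a - t) (p - 1)]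
  have hb' : F b ≤ F 0 := hanti ⟨le_refl 0, ha⟩ ⟨hb, hba⟩ hb
  have hF0 : F 0 = 2 * a ^ p := by
    simp only [hF]
    rw [Real.zero_rpow (by linarith : p ≠ 0)]
    ring_nf
  rw [hF0] at hb'
  simp only [hF] at hb'
  linarith

/-- Second difference of `|·|^p` is bounded by `2Δ^p` for `0 < p ≤ 2`. -/
lemma my_secondDiff {p Δ : ℝ} (hp0 : 0 < p) (hp2 : p ≤ 2) (hΔ : 0 ≤ Δ) (x : ℝ) :
    |(|x - Δ| ^ p - 2 * |x| ^ p + |x + Δ| ^ p)| ≤ 2 * Δ ^ p := by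
  have hΔp : Δ ^ p = |Δ| ^ p := by rw [abs_of_nonneg hΔ]
  rcases le_or_gt p 1 with hp1 | hp1
  · -- use Hölder four times
    have h1 : |x - Δ| ^ p - |x| ^ p ≤ Δ ^ p := by
      have := my_holder hp0.le hp1 (x - Δ) x
      have he : |x - Δ - x| = |Δ| := by rw [show x - Δ - x = -Δ by ring, abs_neg]
      rw [he] at this; linarith [hΔp ▸ this]
    have h2 : |x| ^ p - |x - Δ| ^ p ≤ Δ ^ p := by
      have := my_holder hp0.le hp1 x (x - Δ)
      have he : |x - (x - Δ)| = |Δ| := by rw [show x - (x - Δ) = Δ by ring]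
      rw [he] at this; linarith [hΔp ▸ this]
    have h3 : |x + Δ| ^ p - |x| ^ p ≤ Δ ^ p := by
      have := my_holder hp0.le hp1 (x + Δ) x
      have he : |x + Δ - x| = |Δ| := by rw [show x + Δ - x = Δ by ring]
      rw [he] at this; linarith [hΔp ▸ this]
    have h4 : |x| ^ p - |x + Δ| ^ p ≤ Δ ^ p := by
      have := my_holder hp0.le hp1 x (x + Δ)
      have he : |x - (x + Δ)| = |Δ| := by rw [show x - (x + Δ) = -Δ by ring, abs_neg]
      rw [he] at this; linarith [hΔp ▸ this]
    rw [abs_le]; constructor <;> linarith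
  · -- convexity lower bound, Clarkson upper bound
    have hconv : |x| ^ p ≤ (1/2) * |x - Δ| ^ p + (1/2) * |x + Δ| ^ p := by
      have hmid : |x| ≤ (1/2) * |x - Δ| + (1/2) * |x + Δ| := by
        have : |x + x| ≤ |x - Δ| + |x + Δ| := by
          calc |x + x| = |(x - Δ) + (x + Δ)| := by ring_nf
          _ ≤ |x - Δ| + |x + Δ| := abs_add_le _ _
        have h2x : |x + x| = 2 * |x| := by rw [show x + x = 2*x by ring, abs_mul]; norm_num
        rw [h2x] at this
        linarith
      have h1 : |x| ^ p ≤ ((1/2) * |x - Δ| + (1/2) * |x + Δ|) ^ p :=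
        Real.rpow_le_rpow (abs_nonneg _) hmid (by linarith)
      have h2 := (convexOn_rpow (by linarith : 1 ≤ p)).2 (Set.mem_Ici.mpr (abs_nonneg (x - Δ)))
        (Set.mem_Ici.mpr (abs_nonneg (x + Δ))) (by norm_num : (0:ℝ) ≤ 1/2)
        (by norm_num : (0:ℝ) ≤ 1/2) (by norm_num)
      simp only [smul_eq_mul] at h2
      exact h1.trans h2
    -- Clarkson: |x-Δ|^p + |x+Δ|^p ≤ 2|x|^p + 2Δ^p
    have hkey : |x - Δ| ^ p + |x + Δ| ^ p ≤ 2 * |x| ^ p + 2 * Δ ^ p := by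
      have hswap : |x - Δ| ^ p + |x + Δ| ^ p = (|x| + Δ) ^ p + |(|x| - Δ)| ^ p := by
        rcases le_or_gt 0 x with hx | hx
        · rw [abs_of_nonneg hx, abs_of_nonneg (by linarith : 0 ≤ x + Δ)]
          ring
        · rw [abs_of_neg hx, abs_of_nonpos (by linarith : x - Δ ≤ 0)]
          have h1 : |-x - Δ| = |x + Δ| := by rw [← abs_neg]; ring_nf
          rw [h1, show -(x - Δ) = -x + Δ by ring]
      rw [hswap]
      set a := max |x| Δ
      set b := min |x| Δ
      have hab1 : a + b = |x| + Δ := by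
        rcases le_total |x| Δ with h | h
        · simp [a, b, max_eq_right h, min_eq_left h]; ring
        · simp [a, b, max_eq_left h, min_eq_right h]
      have hab2 : a - b = |(|x| - Δ)| := by
        rcases le_total |x| Δ with h | h
        · simp [a, b, max_eq_right h, min_eq_left h, abs_of_nonpos (by linarith : |x| - Δ ≤ 0)]
        · simp [a, b, max_eq_left h, min_eq_right h, abs_of_nonneg (by linarith : 0 ≤ |x| - Δ)]
      have hab3 : a ^ p + b ^ p = |x| ^ p + Δ ^ p := by
        rcases le_total |x| Δ with h | h
        · simp [a, b, max_eq_right h, min_eq_left h]; try ring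
        · simp [a, b, max_eq_left h, min_eq_right h]; try ring
      have hb0 : 0 ≤ b := le_min (abs_nonneg _) hΔ
      have hba : b ≤ a := min_le_max
      have := my_clarkson hp1.le hp2 hb0 hba
      rw [hab1, hab2] at this
      linarith [this, hab3]
    have hΔp0 : 0 ≤ Δ ^ p := Real.rpow_nonneg hΔ _
    rw [abs_le]; constructor <;> linarith


/-- The midpoint contrast of the covariance:
`(1/2)·r((2k−2)Δ, s) − r((2k−1)Δ, s) + (1/2)·r(2kΔ, s)` with `Δ = 2^{−(n+m)}`. -/
def covContrast (H : ℝ) (n m k : ℕ) (s : ℝ) : ℝ :=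
  (1/2) * fbmCov H ((2 * (k:ℝ) - 2) / 2 ^ (n + m)) s
    - fbmCov H ((2 * (k:ℝ) - 1) / 2 ^ (n + m)) s
    + (1/2) * fbmCov H ((2 * (k:ℝ)) / 2 ^ (n + m)) s

/-- Each entry of the midpoint-contrast covariance row is bounded by `2^{−2(n+m)H}`,
and consequently the weighted sum over the level-`n` grid is bounded by
`(2^n + 1)·max_j |w_j|·2^{−2(n+m)H}`. -/
theorem stmt7 (H : ℝ) (hH : H ∈ Set.Ioo (0:ℝ) 1) (n m : ℕ) (hn : 1 ≤ n) (hm : 1 ≤ m)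
    (k : ℕ) (hk1 : 1 ≤ k) (hk2 : k ≤ 2 ^ (n + m - 1)) :
    (∀ j : ℕ, j ≤ 2 ^ n →
      |covContrast H n m k ((j:ℝ) / 2 ^ n)| ≤ (2:ℝ) ^ (-(2 * ((n:ℝ) + (m:ℝ)) * H))) ∧
    (∀ w : ℕ → ℝ,
      |∑ j ∈ Finset.range (2 ^ n + 1), covContrast H n m k ((j:ℝ) / 2 ^ n) * w j| ≤
        ((2:ℝ) ^ n + 1) *
          ((Finset.range (2 ^ n + 1)).sup' (Finset.nonempty_range_iff.mpr (by positivity))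
            fun j => |w j|) *
          (2:ℝ) ^ (-(2 * ((n:ℝ) + (m:ℝ)) * H))) := by
  obtain ⟨hH0, hH1⟩ := hH
  have hp0 : 0 < 2 * H := by linarith
  have hp2 : 2 * H ≤ 2 := by linarith
  have hk' : (1:ℝ) ≤ (k:ℝ) := by exact_mod_cast hk1
  have hbound : ((1:ℝ) / 2 ^ (n + m)) ^ (2 * H) = (2:ℝ) ^ (-(2 * ((n:ℝ) + (m:ℝ)) * H)) := by
    have h1 : (1:ℝ) / 2 ^ (n + m) = (2:ℝ) ^ (-(((n + m : ℕ)) : ℝ)) := by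
      rw [Real.rpow_neg (by norm_num : (0:ℝ) ≤ 2), Real.rpow_natCast, one_div]
    rw [h1, ← Real.rpow_mul (by norm_num : (0:ℝ) ≤ 2)]
    congr 1
    push_cast
    ring
  have key : ∀ j : ℕ, j ≤ 2 ^ n →
      |covContrast H n m k ((j:ℝ) / 2 ^ n)| ≤ (2:ℝ) ^ (-(2 * ((n:ℝ) + (m:ℝ)) * H)) := by
    intro j _
    set s : ℝ := (j:ℝ) / 2 ^ n with hsdef
    set x1 : ℝ := (2 * (k:ℝ) - 1) / 2 ^ (n + m) with hx1def
    set δ : ℝ := (1:ℝ) / 2 ^ (n + m) with hδdef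
    have hδ0 : (0:ℝ) ≤ δ := by rw [hδdef]; positivity
    have h1 : (2 * (k:ℝ) - 2) / 2 ^ (n + m) = x1 - δ := by rw [hx1def, hδdef]; ring
    have h3 : (2 * (k:ℝ)) / 2 ^ (n + m) = x1 + δ := by rw [hx1def, hδdef]; ring
    have hx1 : (0:ℝ) ≤ x1 := by
      rw [hx1def]; apply div_nonneg (by linarith) (by positivity)
    have hxm : (0:ℝ) ≤ x1 - δ := by
      rw [← h1]; apply div_nonneg (by linarith) (by positivity)
    have hxp : (0:ℝ) ≤ x1 + δ := by linarith
    have hexp : covContrast H n m k s =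
        (1/4) * (|x1 - δ| ^ (2*H) - 2 * |x1| ^ (2*H) + |x1 + δ| ^ (2*H))
        - (1/4) * (|(x1 - s) - δ| ^ (2*H) - 2 * |x1 - s| ^ (2*H) + |(x1 - s) + δ| ^ (2*H)) := by
      unfold covContrast fbmCov
      rw [h1, h3, ← hx1def]
      rw [abs_of_nonneg hxm, abs_of_nonneg hx1, abs_of_nonneg hxp]
      rw [show x1 - δ - s = (x1 - s) - δ by ring, show x1 + δ - s = (x1 - s) + δ by ring]
      ring
    have d1 := my_secondDiff hp0 hp2 hδ0 x1
    have d2 := my_secondDiff hp0 hp2 hδ0 (x1 - s)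
    rw [hexp, ← hbound]
    have habs : |(1/4) * (|x1 - δ| ^ (2*H) - 2 * |x1| ^ (2*H) + |x1 + δ| ^ (2*H))
        - (1/4) * (|(x1 - s) - δ| ^ (2*H) - 2 * |x1 - s| ^ (2*H) + |(x1 - s) + δ| ^ (2*H))| ≤
        (1/4) * |(|x1 - δ| ^ (2*H) - 2 * |x1| ^ (2*H) + |x1 + δ| ^ (2*H))|
        + (1/4) * |(|(x1 - s) - δ| ^ (2*H) - 2 * |x1 - s| ^ (2*H) + |(x1 - s) + δ| ^ (2*H))| := by
      refine (abs_sub _ _).trans ?_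
      rw [abs_mul, abs_mul, show |(1:ℝ)/4| = 1/4 from by norm_num]
    refine habs.trans ?_
    linarith
  refine ⟨key, ?_⟩
  intro w
  have hbd0 : (0:ℝ) ≤ (2:ℝ) ^ (-(2 * ((n:ℝ) + (m:ℝ)) * H)) :=
    (Real.rpow_pos_of_pos (by norm_num) _).le
  have h0mem : 0 ∈ Finset.range (2 ^ n + 1) := by simp
  set M := (Finset.range (2 ^ n + 1)).sup' (Finset.nonempty_range_iff.mpr (by positivity))
      (fun j => |w j|) with hMdef
  have hM0 : 0 ≤ M := le_trans (abs_nonneg (w 0)) (Finset.le_sup' (fun j => |w j|) h0mem)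
  calc |∑ j ∈ Finset.range (2 ^ n + 1), covContrast H n m k ((j:ℝ) / 2 ^ n) * w j|
      ≤ ∑ j ∈ Finset.range (2 ^ n + 1), |covContrast H n m k ((j:ℝ) / 2 ^ n) * w j| :=
        Finset.abs_sum_le_sum_abs _ _
    _ ≤ ∑ _j ∈ Finset.range (2 ^ n + 1), (2:ℝ) ^ (-(2 * ((n:ℝ) + (m:ℝ)) * H)) * M := by
        apply Finset.sum_le_sum
        intro j hj
        rw [abs_mul]
        exact mul_le_mul (key j (Nat.lt_succ_iff.mp (Finset.mem_range.mp hj)))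
          (Finset.le_sup' (fun j => |w j|) hj) (abs_nonneg _) hbd0
    _ = ((2:ℝ) ^ n + 1) * M * (2:ℝ) ^ (-(2 * ((n:ℝ) + (m:ℝ)) * H)) := by
        rw [Finset.sum_const, Finset.card_range, nsmul_eq_mul]
        push_cast
        ring


end
end

section
/- Under the Euler-scheme setting below, for every n ≥ 0 and all indices 0 ≤ r, j ≤ 2^n, ‖y(t^n_j) − y(t^n_r)‖ ≤ G₁·|t^n_j − t^n_r|^α, where G₁ = (L + hFC_α)(1 + ω^{−1}), L = (4/(1 − 2^{1−2α}))·(hC_α)²·F₁·F, and ω = (hFC_α/L)^{1/α}. -/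
/-!
Write `R(a, m) = y_{a+m} - y_a - f(y_a)(x_{a+m} - x_a)` for the remainder of the Euler germ over `m`
grid steps of length `δ = 2⁻ⁿ`. Split `m = m₁ + m₂` with `m₂ ≤ m₁ ≤ 2 m₂` and put `τᵢ = mᵢ δ`.
Then `R` is additive up to the cross term `(f(y_{a+m₁}) - f(y_a))(x_{a+m} - x_{a+m₁})`, which is at most
`2 h² F₁ F C_α² τ₁^α τ₂^α` once the increment of `y` over the first half is known to be at most
`2 hFC_α τ₁^α`. Because `2α > 1`, such splittings satisfy
`τ₁^{2α} + τ₂^{2α} + ½(1 - 2^{1-2α}) τ₁^α τ₂^α ≤ (τ₁ + τ₂)^{2α}`, and this gap absorbs the cross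
term: by strong induction `‖R(a, m)‖ ≤ L (mδ)^{2α}` as long as `L (mδ)^α ≤ hFC_α`, i.e. `mδ ≤ ω`. On such
short intervals the increment of `y` is at most `(L + hFC_α)(mδ)^α`. A longer interval is cut into
`N ≤ 1 + 2/ω` pieces of about `ω/δ` steps, and concavity of `t ↦ t^α` bounds the sum over the pieces
by `N^{1-α} (L + hFC_α)(mδ)^α ≤ (1 + ω⁻¹)(L + hFC_α)(mδ)^α`.
-/

open Real

noncomputable section

def vnorm {d : ℕ} (v : Fin d → ℝ) : ℝ := ⨆ i, |v i|

theorem vnorm_eq_norm {d : ℕ} (v : Fin d → ℝ) : vnorm v = ‖v‖ :=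
  le_antisymm (Real.iSup_le (fun i => norm_le_pi_norm v i) (norm_nonneg v))
    ((pi_norm_le_iff_of_nonneg (Real.iSup_nonneg fun i => abs_nonneg (v i))).2
      fun i => le_ciSup (f := fun i => |v i|) (Set.finite_range _).bddAbove i)

section Inequalities

variable {α : ℝ}

theorem one_sub_two_rpow_pos (hα : 1 / 2 < α) : 0 < 1 - (2 : ℝ) ^ (1 - 2 * α) := by
  linarith [rpow_lt_one_of_one_lt_of_neg one_lt_two (show 1 - 2 * α < 0 by linarith)]

theorem one_sub_two_rpow_le_two_mul_sub_one (hα : 1 / 2 ≤ α) :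
    1 - (2 : ℝ) ^ (1 - 2 * α) ≤ 2 * α - 1 := by
  have hexp : 1 + log 2 * (1 - 2 * α) ≤ (2 : ℝ) ^ (1 - 2 * α) := by
    rw [rpow_def_of_pos two_pos]
    linarith [add_one_le_exp (log 2 * (1 - 2 * α))]
  have hlog : log 2 ≤ 1 := by linarith [log_le_sub_one_of_pos (x := 2) two_pos]
  nlinarith

theorem one_add_rpow_two_mul_add_le (hα : 1 / 2 < α) (hα1 : α ≤ 1) {s : ℝ} (hs : 1 / 2 ≤ s)
    (hs1 : s ≤ 1) :
    1 + s ^ (2 * α) + (1 - (2 : ℝ) ^ (1 - 2 * α)) / 2 * s ^ α ≤ (1 + s) ^ (2 * α) := by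
  have hs0 : 0 < s := by linarith
  have hsq : s ^ (2 * α) ≤ s := by
    simpa using rpow_le_rpow_of_exponent_ge hs0 hs1 (show 1 ≤ 2 * α by linarith)
  have hsα : s ^ α ≤ 2 ^ (1 - α) * s := by
    have h := rpow_le_rpow_of_nonpos (by norm_num) hs (show α - 1 ≤ 0 by linarith)
    rwa [rpow_sub_one hs0.ne', div_le_iff₀ hs0, one_div, inv_rpow zero_le_two,
      ← rpow_neg zero_le_two, neg_sub] at h
  have hθ := (one_sub_two_rpow_pos hα).le
  have h2 : (2 : ℝ) ^ (1 - α) ≤ 2 := by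
    simpa using rpow_le_rpow_of_exponent_le one_le_two (show 1 - α ≤ 1 by linarith)
  have hcoef : (1 - (2 : ℝ) ^ (1 - 2 * α)) / 2 * 2 ^ (1 - α) ≤ 2 * α - 1 := by
    nlinarith [rpow_pos_of_pos two_pos (1 - α), one_sub_two_rpow_le_two_mul_sub_one hα.le]
  calc 1 + s ^ (2 * α) + (1 - (2 : ℝ) ^ (1 - 2 * α)) / 2 * s ^ α
      ≤ 1 + s + (1 - (2 : ℝ) ^ (1 - 2 * α)) / 2 * (2 ^ (1 - α) * s) := by gcongr
    _ ≤ 1 + 2 * α * s := by nlinarith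
    _ ≤ (1 + s) ^ (2 * α) := one_add_mul_self_le_rpow_one_add (by linarith) (by linarith)

theorem rpow_two_mul_add_rpow_two_mul_add_le (hα : 1 / 2 < α) (hα1 : α ≤ 1) {a b : ℝ}
    (hb : 0 < b) (hba : b ≤ a) (hab : a ≤ 2 * b) :
    a ^ (2 * α) + b ^ (2 * α) + (1 - (2 : ℝ) ^ (1 - 2 * α)) / 2 * (a ^ α * b ^ α)
      ≤ (a + b) ^ (2 * α) := by
  have ha : 0 < a := hb.trans_le hba
  obtain ⟨s, rfl⟩ : ∃ s, b = a * s := ⟨b / a, by field_simp⟩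
  have hs0 : 0 ≤ s := nonneg_of_mul_nonneg_right hb.le ha
  have haa : a ^ α * a ^ α = a ^ (2 * α) := by rw [← rpow_add ha, two_mul]
  calc a ^ (2 * α) + (a * s) ^ (2 * α) + (1 - (2 : ℝ) ^ (1 - 2 * α)) / 2 * (a ^ α * (a * s) ^ α)
      = a ^ (2 * α) * (1 + s ^ (2 * α) + (1 - (2 : ℝ) ^ (1 - 2 * α)) / 2 * s ^ α) := by
        rw [mul_rpow ha.le hs0, mul_rpow ha.le hs0, ← haa]; ring
    _ ≤ a ^ (2 * α) * (1 + s) ^ (2 * α) := by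
        gcongr; exact one_add_rpow_two_mul_add_le hα hα1 (by nlinarith) (by nlinarith)
    _ = (a + a * s) ^ (2 * α) := by rw [← mul_rpow ha.le (by positivity), mul_one_add]

theorem rpow_add_nat_mul_rpow_le (hα0 : 0 ≤ α) (hα1 : α ≤ 1) {a c : ℝ} (ha : 0 ≤ a) (hc : 0 ≤ c)
    (K : ℕ) : a ^ α + K * c ^ α ≤ (K + 1) ^ (1 - α) * (a + K * c) ^ α := by
  have hK : (0 : ℝ) < K + 1 := by positivity
  have hmean := (concaveOn_rpow hα0 hα1).2 (Set.mem_Ici.2 ha) (Set.mem_Ici.2 hc)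
    (inv_nonneg.2 hK.le) (div_nonneg K.cast_nonneg hK.le) (by field_simp; ring)
  simp only [smul_eq_mul] at hmean
  rw [show (K + 1 : ℝ)⁻¹ * a + K / (K + 1) * c = (a + K * c) / (K + 1) by field_simp,
    show (K + 1 : ℝ)⁻¹ * a ^ α + K / (K + 1) * c ^ α = (a ^ α + K * c ^ α) / (K + 1) by field_simp,
    div_rpow (by positivity) hK.le, div_le_div_iff₀ hK (rpow_pos_of_pos hK α)] at hmean
  rw [rpow_sub hK, rpow_one, div_mul_eq_mul_div, le_div_iff₀ (rpow_pos_of_pos hK α)]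
  linarith

theorem rpow_one_sub_le_one_add_inv (hα : 1 / 2 ≤ α) {K ω : ℝ} (hK : 1 ≤ K) (hω : 0 < ω)
    (hKω : K ≤ 1 + 2 / ω) : K ^ (1 - α) ≤ 1 + ω⁻¹ := by
  calc K ^ (1 - α) ≤ K ^ (1 / 2 : ℝ) := rpow_le_rpow_of_exponent_le hK (by linarith)
    _ = √K := (sqrt_eq_rpow K).symm
    _ ≤ √((1 + ω⁻¹) ^ 2) := by
        gcongr
        rw [div_eq_mul_inv] at hKω
        nlinarith [inv_pos.2 hω]
    _ = 1 + ω⁻¹ := sqrt_sq (by positivity)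

end Inequalities

theorem le_one_or_mul_le_of_le_max_floor {δ ω : ℝ} (hδ : 0 < δ) {q : ℕ}
    (hq : q ≤ max 1 ⌊ω / δ⌋₊) : q ≤ 1 ∨ q * δ ≤ ω := by
  refine (le_or_gt q 1).imp_right fun hq1 => ?_
  have hfloor : q ≤ ⌊ω / δ⌋₊ := by omega
  rwa [Nat.le_floor_iff' (by omega), le_div_iff₀ hδ] at hfloor

theorem div_max_floor_add_one_le {δ ω : ℝ} (hδ : 0 < δ) (hω : 0 < ω) {m : ℕ} (hm : m * δ ≤ 1) :
    ((m / max 1 ⌊ω / δ⌋₊ + 1 : ℕ) : ℝ) ≤ 1 + 2 / ω := by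
  set p := max 1 ⌊ω / δ⌋₊
  have hp : (1 : ℝ) ≤ p := by exact_mod_cast le_max_left _ _
  have hωp : ω < 2 * p * δ := by
    have h1 := Nat.lt_floor_add_one (ω / δ)
    have h2 : (⌊ω / δ⌋₊ : ℝ) ≤ p := by exact_mod_cast le_max_right _ _
    rw [div_lt_iff₀ hδ] at h1
    nlinarith
  have hmp : (m : ℝ) / p ≤ 2 / ω := by
    rw [div_le_div_iff₀ (by positivity) hω]
    nlinarith [m.cast_nonneg (α := ℝ)]
  push_cast
  linarith [Nat.cast_div_le (α := ℝ) (m := m) (n := p)]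

section Chaining

variable {E : Type*} [SeminormedAddCommGroup E] {z : ℕ → E} {N p : ℕ}

theorem norm_sub_le_add_nat_mul {φ : ℕ → ℝ}
    (hshort : ∀ a q, q ≤ p → a + q ≤ N → ‖z (a + q) - z a‖ ≤ φ q) (K : ℕ) :
    ∀ a q, q ≤ p → a + q + K * p ≤ N → ‖z (a + q + K * p) - z a‖ ≤ φ q + K * φ p := by
  induction K with
  | zero => intro a q hq ha; simpa using hshort a q hq (by simpa using ha)
  | succ K ih =>
    intro a q hq ha
    calc ‖z (a + q + (K + 1) * p) - z a‖
        ≤ ‖z (a + q + K * p + p) - z (a + q + K * p)‖ + ‖z (a + q + K * p) - z a‖ := by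
          rw [add_mul, one_mul, ← add_assoc]; exact norm_sub_le_norm_sub_add_norm_sub _ _ _
      _ ≤ φ p + (φ q + K * φ p) := by
          gcongr
          · exact hshort _ p le_rfl (by linarith)
          · exact ih a q hq (by nlinarith)
      _ = φ q + ↑(K + 1) * φ p := by push_cast; ring

theorem norm_sub_le_of_short_increments {α δ B : ℝ} (hα0 : 0 ≤ α) (hα1 : α ≤ 1) (hδ : 0 ≤ δ)
    (hB : 0 ≤ B) (hp : 0 < p)
    (hshort : ∀ a q, q ≤ p → a + q ≤ N → ‖z (a + q) - z a‖ ≤ B * (q * δ) ^ α) {a m : ℕ}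
    (ha : a + m ≤ N) :
    ‖z (a + m) - z a‖ ≤ B * ((m / p + 1 : ℕ) ^ (1 - α) * (m * δ) ^ α) := by
  have hm : m = m % p + m / p * p := (Nat.mod_add_div' m p).symm
  have h := norm_sub_le_add_nat_mul hshort (m / p) a (m % p) (Nat.mod_lt m hp).le
    (by rwa [add_assoc, ← hm])
  rw [add_assoc, ← hm] at h
  refine h.trans ?_
  calc B * (↑(m % p) * δ) ^ α + ↑(m / p) * (B * (↑p * δ) ^ α)
      = B * ((↑(m % p) * δ) ^ α + ↑(m / p) * (↑p * δ) ^ α) := by ring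
    _ ≤ B * ((↑(m / p) + 1) ^ (1 - α) * (↑(m % p) * δ + ↑(m / p) * (↑p * δ)) ^ α) := by
        gcongr; exact rpow_add_nat_mul_rpow_le hα0 hα1 (by positivity) (by positivity) _
    _ = B * ((m / p + 1 : ℕ) ^ (1 - α) * (m * δ) ^ α) := by
        congr 3
        · push_cast; ring
        · nth_rw 3 [hm]; push_cast; ring

theorem norm_sub_le_mul_abs_sub_rpow {δ α G : ℝ} (hδ : 0 ≤ δ)
    (hz : ∀ a m, a + m ≤ N → ‖z (a + m) - z a‖ ≤ G * (m * δ) ^ α) {r j : ℕ} (hr : r ≤ N)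
    (hj : j ≤ N) : ‖z j - z r‖ ≤ G * |j * δ - r * δ| ^ α := by
  wlog hrj : r ≤ j generalizing r j
  · rw [norm_sub_rev, abs_sub_comm]; exact this hj hr (by omega)
  obtain ⟨m, rfl⟩ := Nat.exists_eq_add_of_le hrj
  rw [Nat.cast_add, add_mul, add_sub_cancel_left, abs_of_nonneg (by positivity)]
  exact hz r m hj

end Chaining

namespace EulerScheme

variable {E V : Type*} [NormedAddCommGroup E] [NormedSpace ℝ E] [NormedAddCommGroup V]
  [NormedSpace ℝ V] (g : E → V →L[ℝ] E) (X : ℕ → V) (y : ℕ → E)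

def remainder (a m : ℕ) : E := y (a + m) - y a - g (y a) (X (a + m) - X a)

theorem remainder_add (a m₁ m₂ : ℕ) :
    remainder g X y a (m₁ + m₂) =
      remainder g X y a m₁ + remainder g X y (a + m₁) m₂ +
        (g (y (a + m₁)) - g (y a)) (X (a + m₁ + m₂) - X (a + m₁)) := by
  simp only [remainder, ← add_assoc, sub_apply, map_sub]
  abel

variable {g X y} {N : ℕ} {δ α C M M₁ L : ℝ}

theorem remainder_eq_zero_of_le_one
    (hstep : ∀ k < N, y (k + 1) = y k + g (y k) (X (k + 1) - X k)) {a m : ℕ} (hm : m ≤ 1)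
    (ha : a + m ≤ N) : remainder g X y a m = 0 := by
  interval_cases m
  · simp [remainder]
  · simp [remainder, hstep a (by omega)]

theorem norm_sub_le_norm_remainder_add
    (hX : ∀ a m, a + m ≤ N → ‖X (a + m) - X a‖ ≤ C * (m * δ) ^ α) (hg : ∀ z, ‖g z‖ ≤ M)
    {a m : ℕ} (ha : a + m ≤ N) :
    ‖y (a + m) - y a‖ ≤ ‖remainder g X y a m‖ + M * C * (m * δ) ^ α := by
  have hM : 0 ≤ M := (norm_nonneg _).trans (hg 0)
  calc ‖y (a + m) - y a‖ = ‖remainder g X y a m + g (y a) (X (a + m) - X a)‖ := by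
        rw [remainder, sub_add_cancel]
    _ ≤ ‖remainder g X y a m‖ + M * ‖X (a + m) - X a‖ :=
        (norm_add_le _ _).trans (by gcongr; exact (g (y a)).le_of_opNorm_le (hg _) _)
    _ ≤ ‖remainder g X y a m‖ + M * C * (m * δ) ^ α := by
        rw [mul_assoc]; gcongr; exact hX a m ha

theorem nonneg_of_four_mul_le (hα : 1 / 2 < α) (hM₁ : 0 ≤ M₁) (hM : 0 ≤ M)
    (hL : 4 * M₁ * M * C ^ 2 ≤ (1 - 2 ^ (1 - 2 * α)) * L) : 0 ≤ L :=
  nonneg_of_mul_nonneg_right ((by positivity : (0 : ℝ) ≤ 4 * M₁ * M * C ^ 2).trans hL)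
    (one_sub_two_rpow_pos hα)

theorem norm_remainder_le (hα : 1 / 2 < α) (hα1 : α ≤ 1) (hδ : 0 < δ) (hM₁ : 0 ≤ M₁)
    (hL : 4 * M₁ * M * C ^ 2 ≤ (1 - 2 ^ (1 - 2 * α)) * L)
    (hstep : ∀ k < N, y (k + 1) = y k + g (y k) (X (k + 1) - X k))
    (hX : ∀ a m, a + m ≤ N → ‖X (a + m) - X a‖ ≤ C * (m * δ) ^ α) (hg : ∀ z, ‖g z‖ ≤ M)
    (hg₁ : ∀ z w, ‖g z - g w‖ ≤ M₁ * ‖z - w‖) (m : ℕ) :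
    ∀ a, a + m ≤ N → (m ≤ 1 ∨ L * (m * δ) ^ α ≤ M * C) →
      ‖remainder g X y a m‖ ≤ L * (m * δ) ^ (2 * α) := by
  have hL₀ := nonneg_of_four_mul_le hα hM₁ ((norm_nonneg _).trans (hg 0)) hL
  induction m using Nat.strong_induction_on with
  | _ m ih =>
  intro a ha hshort
  rcases Nat.lt_or_ge m 2 with hm | hm
  · rw [remainder_eq_zero_of_le_one hstep (by omega) ha, norm_zero]; positivity
  replace hshort : L * (m * δ) ^ α ≤ M * C := hshort.resolve_left (by omega)
  obtain ⟨m₁, m₂, hm₂, h21, h12, rfl⟩ :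
      ∃ m₁ m₂, 1 ≤ m₂ ∧ m₂ ≤ m₁ ∧ m₁ ≤ 2 * m₂ ∧ m = m₁ + m₂ :=
    ⟨m - m / 2, m / 2, by omega, by omega, by omega, by omega⟩
  have hshort' : ∀ k ≤ m₁ + m₂, L * (k * δ) ^ α ≤ M * C := fun k hk =>
    le_trans (by gcongr) hshort
  have hR₁ := ih m₁ (by omega) a (by omega) (Or.inr (hshort' m₁ (by omega)))
  have hR₂ := ih m₂ (by omega) (a + m₁) (by omega) (Or.inr (hshort' m₂ (by omega)))
  have hτ₁ : 0 < (m₁ * δ : ℝ) := mul_pos (Nat.cast_pos.2 (by omega)) hδ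
  have hτ₂ : 0 < (m₂ * δ : ℝ) := mul_pos (Nat.cast_pos.2 hm₂) hδ
  have hMC : 0 ≤ M * C := (mul_nonneg hL₀ (by positivity)).trans hshort
  have hinc : ‖y (a + m₁) - y a‖ ≤ 2 * (M * C) * (m₁ * δ) ^ α := by
    have h := norm_sub_le_norm_remainder_add (y := y) hX hg (a := a) (m := m₁) (by omega)
    rw [two_mul α, rpow_add hτ₁] at hR₁
    nlinarith [rpow_nonneg hτ₁.le α, hshort' m₁ (by omega)]
  have hcross := ((g (y (a + m₁)) - g (y a)).le_of_opNorm_le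
    ((hg₁ _ _).trans (mul_le_mul_of_nonneg_left hinc hM₁)) _).trans
      (mul_le_mul_of_nonneg_left (hX (a + m₁) m₂ (by omega))
        (mul_nonneg hM₁ (mul_nonneg (mul_nonneg zero_le_two hMC) (rpow_nonneg hτ₁.le α))))
  calc ‖remainder g X y a (m₁ + m₂)‖
      ≤ L * (m₁ * δ) ^ (2 * α) + L * (m₂ * δ) ^ (2 * α) +
          M₁ * (2 * (M * C) * (m₁ * δ) ^ α) * (C * (m₂ * δ) ^ α) := by
        rw [remainder_add]
        exact norm_add₃_le.trans (by gcongr)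
    _ ≤ L * ((m₁ * δ) ^ (2 * α) + (m₂ * δ) ^ (2 * α) +
          (1 - 2 ^ (1 - 2 * α)) / 2 * ((m₁ * δ) ^ α * (m₂ * δ) ^ α)) := by
        nlinarith [mul_nonneg (rpow_nonneg hτ₁.le α) (rpow_nonneg hτ₂.le α)]
    _ ≤ L * (m₁ * δ + m₂ * δ) ^ (2 * α) := by
        gcongr
        refine rpow_two_mul_add_rpow_two_mul_add_le hα hα1 hτ₂ (by gcongr) ?_
        rw [← mul_assoc]; gcongr; exact_mod_cast h12
    _ = L * (↑(m₁ + m₂) * δ) ^ (2 * α) := by rw [Nat.cast_add, add_mul]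

theorem norm_sub_le_of_short (hα : 1 / 2 < α) (hα1 : α ≤ 1) (hδ : 0 < δ) (hN : N * δ ≤ 1)
    (hM₁ : 0 ≤ M₁) (hL : 4 * M₁ * M * C ^ 2 ≤ (1 - 2 ^ (1 - 2 * α)) * L)
    (hstep : ∀ k < N, y (k + 1) = y k + g (y k) (X (k + 1) - X k))
    (hX : ∀ a m, a + m ≤ N → ‖X (a + m) - X a‖ ≤ C * (m * δ) ^ α) (hg : ∀ z, ‖g z‖ ≤ M)
    (hg₁ : ∀ z w, ‖g z - g w‖ ≤ M₁ * ‖z - w‖) {a m : ℕ} (ha : a + m ≤ N)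
    (hshort : m ≤ 1 ∨ L * (m * δ) ^ α ≤ M * C) :
    ‖y (a + m) - y a‖ ≤ (L + M * C) * (m * δ) ^ α := by
  have hR := norm_remainder_le hα hα1 hδ hM₁ hL hstep hX hg hg₁ m a ha hshort
  have hL₀ := nonneg_of_four_mul_le hα hM₁ ((norm_nonneg _).trans (hg 0)) hL
  have hτ : m * δ ≤ 1 := le_trans (by gcongr; exact_mod_cast (show m ≤ N by omega)) hN
  have hpow : (m * δ) ^ (2 * α) ≤ (m * δ) ^ α :=
    rpow_le_rpow_of_exponent_ge' (by positivity) hτ (by linarith) (by linarith)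
  calc ‖y (a + m) - y a‖ ≤ L * (m * δ) ^ (2 * α) + M * C * (m * δ) ^ α :=
        (norm_sub_le_norm_remainder_add hX hg ha).trans (by gcongr)
    _ ≤ (L + M * C) * (m * δ) ^ α := by rw [add_mul]; gcongr

theorem norm_sub_le_mul_rpow (hα : 1 / 2 < α) (hα1 : α ≤ 1) (hδ : 0 < δ) (hN : N * δ ≤ 1)
    (hC : 0 ≤ C) (hM₁ : 0 ≤ M₁) (hstep : ∀ k < N, y (k + 1) = y k + g (y k) (X (k + 1) - X k))
    (hX : ∀ a m, a + m ≤ N → ‖X (a + m) - X a‖ ≤ C * (m * δ) ^ α) (hg : ∀ z, ‖g z‖ ≤ M)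
    (hg₁ : ∀ z w, ‖g z - g w‖ ≤ M₁ * ‖z - w‖) {ω G : ℝ}
    (hL : L = 4 / (1 - 2 ^ (1 - 2 * α)) * M₁ * M * C ^ 2) (hω : ω = (M * C / L) ^ (1 / α))
    (hG : G = (L + M * C) * (1 + ω⁻¹)) {a m : ℕ} (ha : a + m ≤ N) :
    ‖y (a + m) - y a‖ ≤ G * (m * δ) ^ α := by
  have hθ := one_sub_two_rpow_pos hα
  have hM : 0 ≤ M := (norm_nonneg _).trans (hg 0)
  have hL₀ : 0 ≤ L := by rw [hL]; positivity
  have hω₀ : 0 ≤ ω := by rw [hω]; positivity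
  have hL' : 4 * M₁ * M * C ^ 2 ≤ (1 - 2 ^ (1 - 2 * α)) * L := by rw [hL]; field_simp; rfl
  have hshort {b q : ℕ} :=
    norm_sub_le_of_short hα hα1 hδ hN hM₁ hL' hstep hX hg hg₁ (a := b) (m := q)
  by_cases hm : L * (m * δ) ^ α ≤ M * C
  · refine (hshort ha (Or.inr hm)).trans ?_
    rw [hG]
    gcongr
    exact le_mul_of_one_le_right (by positivity) (by linarith [inv_nonneg.2 hω₀])
  have hMC : 0 < M * C := by
    refine (mul_nonneg hM hC).lt_of_ne fun h => hm ?_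
    rw [← h, hL, show 4 / (1 - 2 ^ (1 - 2 * α)) * M₁ * M * C ^ 2 =
      4 / (1 - 2 ^ (1 - 2 * α)) * M₁ * (M * C) * C by ring, ← h]
    simp
  have hL0 : 0 < L := hL₀.lt_of_ne fun h => hm (by rw [← h, zero_mul]; exact hMC.le)
  have hω0 : 0 < ω := by rw [hω]; positivity
  have hωα : L * ω ^ α = M * C := by
    rw [hω, one_div, rpow_inv_rpow (by positivity) (by linarith)]; field_simp
  have hpieces : ∀ b q, q ≤ max 1 ⌊ω / δ⌋₊ → b + q ≤ N →
      ‖y (b + q) - y b‖ ≤ (L + M * C) * (q * δ) ^ α := fun b q hq hb =>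
    hshort hb ((le_one_or_mul_le_of_le_max_floor hδ hq).imp_right fun h => hωα ▸ by gcongr)
  have hmδ : m * δ ≤ 1 := le_trans (by gcongr; exact_mod_cast (show m ≤ N by omega)) hN
  calc ‖y (a + m) - y a‖
      ≤ (L + M * C) * ((m / max 1 ⌊ω / δ⌋₊ + 1 : ℕ) ^ (1 - α) * (m * δ) ^ α) :=
        norm_sub_le_of_short_increments (by linarith) hα1 hδ.le (by positivity) (by positivity)
          hpieces ha
    _ ≤ (L + M * C) * ((1 + ω⁻¹) * (m * δ) ^ α) := by
        gcongr
        exact rpow_one_sub_le_one_add_inv hα.le (Nat.one_le_cast.2 (Nat.le_add_left 1 _)) hω0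
          (div_max_floor_add_one_le hδ hω0 hmδ)
    _ = G * (m * δ) ^ α := by rw [hG]; ring

end EulerScheme

theorem opNorm_mulVecLin_le {m n : Type*} [Fintype m] [Fintype n] (A : Matrix m n ℝ) {B : ℝ}
    (hB : 0 ≤ B) (hA : ∀ i j, |A i j| ≤ B) :
    ‖ContinuousLinearMap.mk (Matrix.mulVecLin A)‖ ≤ Fintype.card n * B := by
  refine ContinuousLinearMap.opNorm_le_bound _ (by positivity) fun v =>
    (pi_norm_le_iff_of_nonneg (by positivity)).2 fun i => ?_
  calc ‖Matrix.mulVec A v i‖ ≤ ∑ j, |A i j| * |v j| := by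
        simpa only [Matrix.mulVec, dotProduct, Real.norm_eq_abs, ← abs_mul]
          using Finset.abs_sum_le_sum_abs _ _
    _ ≤ ∑ _j : n, B * ‖v‖ := by
        gcongr with j
        · exact hA i j
        · exact norm_le_pi_norm v j
    _ = Fintype.card n * B * ‖v‖ := by simp [mul_assoc]

theorem opNorm_mulVecLin_sub_le {m n : Type*} [Fintype m] [Fintype n] (A A' : Matrix m n ℝ)
    {B : ℝ} (hB : 0 ≤ B) (hA : ∀ i j, |A i j - A' i j| ≤ B) :
    ‖ContinuousLinearMap.mk (Matrix.mulVecLin A) - ContinuousLinearMap.mk (Matrix.mulVecLin A')‖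
      ≤ Fintype.card n * B := by
  rw [show ContinuousLinearMap.mk (Matrix.mulVecLin A) - ContinuousLinearMap.mk
      (Matrix.mulVecLin A') = ContinuousLinearMap.mk (Matrix.mulVecLin (A - A')) from
    ContinuousLinearMap.ext fun v => (Matrix.sub_mulVec _ _ v).symm]
  exact opNorm_mulVecLin_le _ hB hA

theorem norm_sub_dyadic_le {h : ℕ} {x : ℝ → Fin h → ℝ} {α Cα : ℝ}
    (hx : ∀ s t : ℝ, s ∈ Set.Icc (0:ℝ) 1 → t ∈ Set.Icc (0:ℝ) 1 →
      vnorm (fun j => x s j - x t j) ≤ Cα * |s - t| ^ α) (n b q : ℕ) (hbq : b + q ≤ 2 ^ n) :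
    ‖x ((b + q : ℕ) / 2 ^ n) - x (b / 2 ^ n)‖ ≤ Cα * (q * (2 ^ n)⁻¹) ^ α := by
  have hgrid {k : ℕ} (hk : k ≤ 2 ^ n) : (k : ℝ) / 2 ^ n ∈ Set.Icc (0 : ℝ) 1 :=
    ⟨by positivity, div_le_one_of_le₀ (by exact_mod_cast hk) (by positivity)⟩
  have hxq := hx _ _ (hgrid hbq) (hgrid (by omega : b ≤ 2 ^ n))
  rw [vnorm_eq_norm] at hxq
  refine hxq.trans_eq ?_
  rw [Nat.cast_add, add_div, add_sub_cancel_left, abs_of_nonneg (by positivity), div_eq_mul_inv]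

theorem stmt13_general (d h : ℕ) (hd : 0 < d) (hh : 0 < h)
    (α Cα F F₁ : ℝ) (hα : 1/2 < α) (hα1 : α ≤ 1) (hCα : 0 < Cα)
    (x : ℝ → Fin h → ℝ)
    (hx : ∀ s t : ℝ, s ∈ Set.Icc (0:ℝ) 1 → t ∈ Set.Icc (0:ℝ) 1 →
      vnorm (fun j => x s j - x t j) ≤ Cα * |s - t| ^ α)
    (f : (Fin d → ℝ) → Fin d → Fin h → ℝ)
    (hfb : ∀ y i j, |f y i j| ≤ F)
    (hfl : ∀ y z i j, |f y i j - f z i j| ≤ F₁ * vnorm (fun l => y l - z l))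
    (y : ℕ → ℕ → Fin d → ℝ)
    (hyrec : ∀ n k : ℕ, k < 2 ^ n → ∀ i,
      y n (k + 1) i = y n k i +
        ∑ j, f (y n k) i j * (x (((k:ℝ) + 1) / 2 ^ n) j - x ((k:ℝ) / 2 ^ n) j))
    (L ω G₁ : ℝ)
    (hL : L = 4 / (1 - (2:ℝ) ^ (1 - 2 * α)) * ((h:ℝ) * Cα) ^ 2 * F₁ * F)
    (hω : ω = ((h:ℝ) * F * Cα / L) ^ (1/α))
    (hG : G₁ = (L + (h:ℝ) * F * Cα) * (1 + ω⁻¹)) :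
    ∀ n r j : ℕ, r ≤ 2 ^ n → j ≤ 2 ^ n →
      vnorm (fun i => y n j i - y n r i) ≤
        G₁ * |(j:ℝ) / 2 ^ n - (r:ℝ) / 2 ^ n| ^ α := by
  have hF : 0 ≤ F := (abs_nonneg _).trans (hfb 0 ⟨0, hd⟩ ⟨0, hh⟩)
  have hF₁ : 0 ≤ F₁ := by
    have : Nonempty (Fin d) := ⟨⟨0, hd⟩⟩
    have h01 := hfl 0 1 ⟨0, hd⟩ ⟨0, hh⟩
    rw [vnorm_eq_norm] at h01
    simpa using (abs_nonneg _).trans h01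
  intro n r j hr hj
  rw [vnorm_eq_norm]
  simp only [div_eq_mul_inv]
  refine norm_sub_le_mul_abs_sub_rpow (by positivity) (fun a m ha => ?_) hr hj
  refine EulerScheme.norm_sub_le_mul_rpow
    (g := fun z => ContinuousLinearMap.mk (Matrix.mulVecLin (f z)))
    (X := fun k => x (k / 2 ^ n)) (M := h * F) (M₁ := h * F₁) hα hα1 (by positivity) (by simp)
    hCα.le (by positivity) (fun k hk => ?_) (norm_sub_dyadic_le hx n)
    (fun z => by simpa using opNorm_mulVecLin_le (f z) hF (hfb z)) (fun z w => ?_)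
    (by rw [hL]; ring) hω hG ha
  · ext i
    simp only [hyrec n k hk i, Nat.cast_succ]
    rfl
  · simpa [mul_assoc] using opNorm_mulVecLin_sub_le (f z) (f w) (by positivity)
      fun i j => (hfl z w i j).trans_eq (by rw [vnorm_eq_norm]; rfl)

/-- Lemma (first-order a priori bound for the Euler scheme): under the Euler-scheme
setting, `‖y(t^n_j) − y(t^n_r)‖ ≤ G₁·|t^n_j − t^n_r|^α` with
`G₁ = (L + hFC_α)(1 + ω⁻¹)`, `L = (4/(1 − 2^{1−2α}))·(hC_α)²·F₁·F`,
`ω = (hFC_α/L)^{1/α}`. -/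
theorem stmt13 (d h : ℕ) (hd : 0 < d) (hh : 0 < h)
    (α Cα F F₁ : ℝ) (hα : 1/2 < α) (hα1 : α ≤ 1) (hCα : 0 < Cα)
    (x : ℝ → Fin h → ℝ)
    (hx : ∀ s t : ℝ, s ∈ Set.Icc (0:ℝ) 1 → t ∈ Set.Icc (0:ℝ) 1 →
      vnorm (fun j => x s j - x t j) ≤ Cα * |s - t| ^ α)
    (f : (Fin d → ℝ) → Fin d → Fin h → ℝ)
    (hfb : ∀ y i j, |f y i j| ≤ F)
    (hfl : ∀ y z i j, |f y i j - f z i j| ≤ F₁ * vnorm (fun l => y l - z l))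
    (y0 : Fin d → ℝ) (y : ℕ → ℕ → Fin d → ℝ)
    (hy0 : ∀ n, y n 0 = y0)
    (hyrec : ∀ n k : ℕ, k < 2 ^ n → ∀ i,
      y n (k + 1) i = y n k i +
        ∑ j, f (y n k) i j * (x (((k:ℝ) + 1) / 2 ^ n) j - x ((k:ℝ) / 2 ^ n) j))
    (L ω G₁ : ℝ)
    (hL : L = 4 / (1 - (2:ℝ) ^ (1 - 2 * α)) * ((h:ℝ) * Cα) ^ 2 * F₁ * F)
    (hω : ω = ((h:ℝ) * F * Cα / L) ^ (1/α))
    (hG : G₁ = (L + (h:ℝ) * F * Cα) * (1 + ω⁻¹)) :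
    ∀ n r j : ℕ, r ≤ 2 ^ n → j ≤ 2 ^ n →
      vnorm (fun i => y n j i - y n r i) ≤
        G₁ * |(j:ℝ) / 2 ^ n - (r:ℝ) / 2 ^ n| ^ α :=
  stmt13_general d h hd hh α Cα F F₁ hα hα1 hCα x hx f hfb hfl y hyrec L ω G₁ hL hω hG

end
end

section
/- Let α, β ∈ (0,1] with α + β > 1, and let u, v : [0,1] → ℝ be Hölder continuous of exponents α and β respectively, i.e., |u(s)−u(t)| ≤ H_α(u)·|s−t|^α and |v(s)−v(t)| ≤ H_β(v)·|s−t|^β for all s,t ∈ [0,1]. Then for every 0 ≤ s ≤ t ≤ 1 and every finite partition s = t₀ < t₁ < … < t_m = t of [s,t], | Σ_{i=0}^{m−1} v(t_i)·(u(t_{i+1}) − u(t_i)) − v(s)·(u(t) − u(s)) | ≤ K(α+β)·H_α(u)·H_β(v)·|t−s|^{α+β}, where K(γ) = 1 + Σ_{n=1}^{∞} n^{−γ}. -/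
/-!
Young's point-removal argument. Among the `m + 1` gaps `aⱼ = pⱼ₊₁ - pⱼ` of a partition of
`[s, t]` there are two adjacent ones with `aᵢ ^ β * aᵢ₊₁ ^ α ≤ ((t - s) / m) ^ (α + β)`: by
weighted AM-GM the left side is at most `((β aᵢ + α aᵢ₊₁) / (α + β)) ^ (α + β)`, and these
weighted means average to at most `(t - s) / m`. Deleting the point `pᵢ₊₁` changes the
Riemann–Stieltjes sum by `(v pᵢ₊₁ - v pᵢ) (u pᵢ₊₂ - u pᵢ₊₁)`, which the Hölder bounds control by
`Hu Hv ((t - s) / m) ^ (α + β)`. Deleting points one at a time down to the trivial partition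
costs at most `Hu Hv (t - s) ^ (α + β) ∑ n ^ (-(α + β))`, a convergent series as `α + β > 1`.
-/

open Finset

theorem rpow_mul_rpow_le_weighted_mean_rpow {α β a b : ℝ} (hα : 0 ≤ α) (hβ : 0 ≤ β)
    (hαβ : 0 < α + β) (ha : 0 ≤ a) (hb : 0 ≤ b) :
    a ^ β * b ^ α ≤ ((β * a + α * b) / (α + β)) ^ (α + β) := by
  have hgeom : a ^ β * b ^ α = (a ^ (β / (α + β)) * b ^ (α / (α + β))) ^ (α + β) := by
    rw [Real.mul_rpow (by positivity) (by positivity), ← Real.rpow_mul ha,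
      ← Real.rpow_mul hb, div_mul_cancel₀ _ hαβ.ne', div_mul_cancel₀ _ hαβ.ne']
  have hamgm : a ^ (β / (α + β)) * b ^ (α / (α + β)) ≤ (β * a + α * b) / (α + β) := by
    convert Real.geom_mean_le_arith_mean2_weighted (w₁ := β / (α + β)) (w₂ := α / (α + β))
      (by positivity) (by positivity) ha hb (by field_simp; ring) using 1
    field_simp
  rw [hgeom]
  exact Real.rpow_le_rpow (by positivity) hamgm hαβ.le

theorem exists_rpow_mul_rpow_succ_le {α β : ℝ} (hα : 0 ≤ α) (hβ : 0 ≤ β) (hαβ : 0 < α + β)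
    {k : ℕ} (hk : k ≠ 0) {a : ℕ → ℝ} (ha : ∀ j ≤ k, 0 ≤ a j) :
    ∃ i < k, a i ^ β * a (i + 1) ^ α ≤ ((∑ j ∈ range (k + 1), a j) / k) ^ (α + β) := by
  set L := ∑ j ∈ range (k + 1), a j
  have hinit : ∑ i ∈ range k, a i ≤ L := by
    rw [show L = _ from sum_range_succ a k]
    linarith [ha k le_rfl]
  have htail : ∑ i ∈ range k, a (i + 1) ≤ L := by
    rw [show L = _ from sum_range_succ' a k]
    linarith [ha 0 (Nat.zero_le k)]
  have hsum : ∑ i ∈ range k, (β * a i + α * a (i + 1)) / (α + β) ≤ ∑ _i ∈ range k, L / k := by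
    rw [← sum_div, sum_add_distrib, ← mul_sum, ← mul_sum, sum_const, card_range, nsmul_eq_mul,
      mul_div_cancel₀ _ (Nat.cast_ne_zero.mpr hk), div_le_iff₀ hαβ]
    nlinarith [mul_le_mul_of_nonneg_left hinit hβ, mul_le_mul_of_nonneg_left htail hα]
  obtain ⟨i, hi, hle⟩ := exists_le_of_sum_le (nonempty_range_iff.mpr hk) hsum
  have hi : i < k := mem_range.mp hi
  have hmean_nonneg : 0 ≤ (β * a i + α * a (i + 1)) / (α + β) :=
    div_nonneg (add_nonneg (mul_nonneg hβ (ha i hi.le)) (mul_nonneg hα (ha (i + 1) hi))) hαβ.le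
  exact ⟨i, hi, (rpow_mul_rpow_le_weighted_mean_rpow hα hβ hαβ (ha i hi.le) (ha (i + 1) hi)).trans
    (Real.rpow_le_rpow hmean_nonneg hle hαβ.le)⟩

def riemannStieltjesSum (v u : ℝ → ℝ) (p : ℕ → ℝ) (m : ℕ) : ℝ :=
  ∑ i ∈ range m, v (p i) * (u (p (i + 1)) - u (p i))

def dropPoint (p : ℕ → ℝ) (k : ℕ) : ℕ → ℝ := fun j => if j < k then p j else p (j + 1)

theorem riemannStieltjesSum_dropPoint (v u : ℝ → ℝ) (p : ℕ → ℝ) {i m : ℕ} (hi : i < m) :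
    riemannStieltjesSum v u p (m + 1) = riemannStieltjesSum v u (dropPoint p (i + 1)) m +
      (v (p (i + 1)) - v (p i)) * (u (p (i + 2)) - u (p (i + 1))) := by
  induction m, hi using Nat.le_induction with
  | base =>
    have hlow : riemannStieltjesSum v u (dropPoint p (i + 1)) i = riemannStieltjesSum v u p i :=
      sum_congr rfl fun j hj => by
        have := mem_range.mp hj
        simp only [dropPoint, if_pos (show j < i + 1 by omega),
          if_pos (show j + 1 < i + 1 by omega)]
    simp only [riemannStieltjesSum] at hlow ⊢
    rw [sum_range_succ, sum_range_succ, sum_range_succ, hlow]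
    simp only [dropPoint, lt_irrefl, if_false, if_pos (Nat.lt_succ_self i)]
    ring
  | succ m hm ih =>
    simp only [riemannStieltjesSum] at ih ⊢
    rw [sum_range_succ, ih, sum_range_succ]
    simp only [dropPoint, if_neg (show ¬ m < i + 1 by omega),
      if_neg (show ¬ m + 1 < i + 1 by omega)]
    ring

theorem dropPoint_le_succ {p : ℕ → ℝ} {i m : ℕ} (hp : ∀ j < m + 1, p j ≤ p (j + 1)) :
    ∀ j < m, dropPoint p (i + 1) j ≤ dropPoint p (i + 1) (j + 1) := by
  intro j hj
  simp only [dropPoint]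
  split_ifs with h₁ h₂ h₂
  · exact hp j (by omega)
  · exact (hp j (by omega)).trans (hp (j + 1) (by omega))
  · omega
  · exact hp (j + 1) (by omega)

theorem abs_riemannStieltjesSum_sub_le {S : Set ℝ} {α β Hu Hv : ℝ} {u v : ℝ → ℝ}
    (hα : 0 ≤ α) (hβ : 0 ≤ β) (hαβ : 0 < α + β) (hHu : 0 ≤ Hu) (hHv : 0 ≤ Hv)
    (hu : ∀ x y, x ∈ S → y ∈ S → |u x - u y| ≤ Hu * |x - y| ^ α)
    (hv : ∀ x y, x ∈ S → y ∈ S → |v x - v y| ≤ Hv * |x - y| ^ β) (m : ℕ) (p : ℕ → ℝ)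
    (hpS : ∀ j ≤ m, p j ∈ S) (hp : ∀ j < m, p j ≤ p (j + 1)) :
    |riemannStieltjesSum v u p m - v (p 0) * (u (p m) - u (p 0))| ≤
      Hu * Hv * (p m - p 0) ^ (α + β) * ∑ n ∈ Ico 1 m, (n : ℝ) ^ (-(α + β)) := by
  induction m generalizing p with
  | zero => simp [riemannStieltjesSum]
  | succ m ih =>
    rcases Nat.eq_zero_or_pos m with rfl | hm
    · simp [riemannStieltjesSum]
    set a : ℕ → ℝ := fun j => p (j + 1) - p j
    have ha : ∀ j ≤ m, 0 ≤ a j := fun j hj => sub_nonneg.mpr (hp j (by omega))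
    have hL : ∑ j ∈ range (m + 1), a j = p (m + 1) - p 0 := sum_range_sub p (m + 1)
    have hL_nonneg : 0 ≤ p (m + 1) - p 0 :=
      hL ▸ sum_nonneg fun j hj => ha j (Nat.lt_succ_iff.mp (mem_range.mp hj))
    obtain ⟨i, hi, hpair⟩ := exists_rpow_mul_rpow_succ_le hα hβ hαβ hm.ne' ha
    rw [hL] at hpair
    set q := dropPoint p (i + 1)
    have hq0 : q 0 = p 0 := if_pos (Nat.succ_pos i)
    have hqm : q m = p (m + 1) := if_neg (by omega)
    have hqS : ∀ j ≤ m, q j ∈ S := fun j hj => by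
      simp only [q, dropPoint]
      split_ifs <;> exact hpS _ (by omega)
    have hIH := ih q hqS (dropPoint_le_succ hp)
    rw [hq0, hqm] at hIH
    have hΔv : |v (p (i + 1)) - v (p i)| ≤ Hv * a i ^ β := by
      simpa [a, abs_of_nonneg (ha i hi.le)] using
        hv _ _ (hpS (i + 1) (by omega)) (hpS i (by omega))
    have hΔu : |u (p (i + 2)) - u (p (i + 1))| ≤ Hu * a (i + 1) ^ α := by
      simpa [a, abs_of_nonneg (ha (i + 1) hi)] using
        hu _ _ (hpS (i + 2) (by omega)) (hpS (i + 1) (by omega))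
    have hremoved : |(v (p (i + 1)) - v (p i)) * (u (p (i + 2)) - u (p (i + 1)))| ≤
        Hu * Hv * (p (m + 1) - p 0) ^ (α + β) * (m : ℝ) ^ (-(α + β)) := by
      rw [abs_mul, Real.rpow_neg (Nat.cast_nonneg m), mul_assoc, ← div_eq_mul_inv,
        ← Real.div_rpow hL_nonneg (Nat.cast_nonneg m)]
      calc _ ≤ Hv * a i ^ β * (Hu * a (i + 1) ^ α) :=
            mul_le_mul hΔv hΔu (abs_nonneg _) ((abs_nonneg _).trans hΔv)
        _ = Hu * Hv * (a i ^ β * a (i + 1) ^ α) := by ring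
        _ ≤ _ := mul_le_mul_of_nonneg_left hpair (mul_nonneg hHu hHv)
    rw [riemannStieltjesSum_dropPoint v u p hi, sum_Ico_succ_top hm]
    calc _ ≤ |riemannStieltjesSum v u q m - v (p 0) * (u (p (m + 1)) - u (p 0))| +
            |(v (p (i + 1)) - v (p i)) * (u (p (i + 2)) - u (p (i + 1)))| := by
          rw [add_sub_right_comm]; exact abs_add_le _ _
      _ ≤ _ := by rw [mul_add]; exact add_le_add hIH hremoved

theorem mem_Icc_of_le_succ {p : ℕ → ℝ} {m : ℕ} (hp : ∀ i < m, p i ≤ p (i + 1)) {j : ℕ}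
    (hj : j ≤ m) : p j ∈ Set.Icc (p 0) (p m) := by
  have hmono : MonotoneOn p (Set.Iic m) :=
    monotoneOn_of_le_succ Set.ordConnected_Iic fun a _ _ ha => hp a ha
  exact ⟨hmono (Nat.zero_le m) hj (Nat.zero_le j), hmono hj (Set.mem_Iic.mpr le_rfl) hj⟩

theorem nonneg_of_abs_sub_le_mul_rpow {f : ℝ → ℝ} {H r x y : ℝ} (hxy : x ≠ y)
    (h : |f x - f y| ≤ H * |x - y| ^ r) : 0 ≤ H :=
  nonneg_of_mul_nonneg_left ((abs_nonneg _).trans h)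
    (Real.rpow_pos_of_pos (abs_pos.mpr (sub_ne_zero.mpr hxy)) r)

theorem sum_Ico_one_rpow_neg_le_tsum {γ : ℝ} (hγ : 1 < γ) (m : ℕ) :
    ∑ n ∈ Ico 1 m, (n : ℝ) ^ (-γ) ≤ ∑' n : ℕ, ((n : ℝ) + 1) ^ (-γ) := by
  have hsummable : Summable fun n : ℕ => ((n : ℝ) + 1) ^ (-γ) := by
    simpa using (summable_nat_add_iff 1).mpr (Real.summable_nat_rpow.mpr (by linarith))
  rw [sum_Ico_eq_sum_range]
  simp only [Nat.cast_add, Nat.cast_one, add_comm (1 : ℝ)]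
  exact hsummable.sum_le_tsum _ fun n _ => by positivity

theorem stmt15_general (α β : ℝ) (hα0 : 0 < α) (hβ0 : 0 < β)
    (hαβ : 1 < α + β) (u v : ℝ → ℝ) (Hu Hv : ℝ)
    (hu : ∀ s t : ℝ, s ∈ Set.Icc (0:ℝ) 1 → t ∈ Set.Icc (0:ℝ) 1 →
      |u s - u t| ≤ Hu * |s - t| ^ α)
    (hv : ∀ s t : ℝ, s ∈ Set.Icc (0:ℝ) 1 → t ∈ Set.Icc (0:ℝ) 1 →
      |v s - v t| ≤ Hv * |s - t| ^ β)
    (s t : ℝ) (hs : 0 ≤ s) (hst : s ≤ t) (ht : t ≤ 1)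
    (m : ℕ) (p : ℕ → ℝ) (hp0 : p 0 = s) (hpm : p m = t)
    (hmono : ∀ i : ℕ, i < m → p i < p (i + 1)) :
    |∑ i ∈ Finset.range m, v (p i) * (u (p (i + 1)) - u (p i)) - v s * (u t - u s)| ≤
      (1 + ∑' n : ℕ, ((n:ℝ) + 1) ^ (-(α + β))) * Hu * Hv * (t - s) ^ (α + β) := by
  have hunit : (0 : ℝ) ∈ Set.Icc (0 : ℝ) 1 ∧ (1 : ℝ) ∈ Set.Icc (0 : ℝ) 1 := by norm_num
  have hHu : 0 ≤ Hu := nonneg_of_abs_sub_le_mul_rpow zero_ne_one (hu 0 1 hunit.1 hunit.2)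
  have hHv : 0 ≤ Hv := nonneg_of_abs_sub_le_mul_rpow zero_ne_one (hv 0 1 hunit.1 hunit.2)
  have hp : ∀ i < m, p i ≤ p (i + 1) := fun i hi => (hmono i hi).le
  have hpS : ∀ j ≤ m, p j ∈ Set.Icc (0 : ℝ) 1 := fun j hj => by
    have hj := mem_Icc_of_le_succ hp hj
    rw [hp0, hpm] at hj
    exact ⟨hs.trans hj.1, hj.2.trans ht⟩
  have hYL := abs_riemannStieltjesSum_sub_le hα0.le hβ0.le (by linarith) hHu hHv hu hv m p hpS hp
  rw [hp0, hpm] at hYL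
  calc _ ≤ Hu * Hv * (t - s) ^ (α + β) * ∑ n ∈ Ico 1 m, (n : ℝ) ^ (-(α + β)) := hYL
    _ ≤ Hu * Hv * (t - s) ^ (α + β) * (1 + ∑' n : ℕ, ((n : ℝ) + 1) ^ (-(α + β))) := by
      gcongr
      linarith [sum_Ico_one_rpow_neg_le_tsum hαβ m]
    _ = _ := by ring

/-- Young–Lóeve estimate (discrete Riemann-sum form): if `u` is `α`-Hölder and `v` is
`β`-Hölder on `[0,1]` with `α + β > 1`, then for every partition
`s = p₀ < p₁ < … < p_m = t` of `[s,t] ⊆ [0,1]`,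
`|Σ_{i<m} v(p_i)(u(p_{i+1}) − u(p_i)) − v(s)(u(t) − u(s))|
  ≤ K(α+β)·H_α(u)·H_β(v)·|t−s|^{α+β}` with `K(γ) = 1 + Σ_{n≥1} n^{−γ}`. -/
theorem stmt15 (α β : ℝ) (hα0 : 0 < α) (hα1 : α ≤ 1) (hβ0 : 0 < β) (hβ1 : β ≤ 1)
    (hαβ : 1 < α + β) (u v : ℝ → ℝ) (Hu Hv : ℝ)
    (hu : ∀ s t : ℝ, s ∈ Set.Icc (0:ℝ) 1 → t ∈ Set.Icc (0:ℝ) 1 →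
      |u s - u t| ≤ Hu * |s - t| ^ α)
    (hv : ∀ s t : ℝ, s ∈ Set.Icc (0:ℝ) 1 → t ∈ Set.Icc (0:ℝ) 1 →
      |v s - v t| ≤ Hv * |s - t| ^ β)
    (s t : ℝ) (hs : 0 ≤ s) (hst : s ≤ t) (ht : t ≤ 1)
    (m : ℕ) (p : ℕ → ℝ) (hp0 : p 0 = s) (hpm : p m = t)
    (hmono : ∀ i : ℕ, i < m → p i < p (i + 1)) :
    |∑ i ∈ Finset.range m, v (p i) * (u (p (i + 1)) - u (p i)) - v s * (u t - u s)| ≤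
      (1 + ∑' n : ℕ, ((n:ℝ) + 1) ^ (-(α + β))) * Hu * Hv * (t - s) ^ (α + β) :=
  stmt15_general α β hα0 hβ0 hαβ u v Hu Hv hu hv s t hs hst ht m p hp0 hpm hmono
end
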